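/- arXiv:2310.02747 — 10 statements merged into one kernel-verified Lean document; each statement's English description precedes it below -/
import Mathlib

section
/- Let m, n ∈ ℕ with m ≥ 3 odd and set ℓ := ⌊m/2⌋. For every p ∈ ZMod m and every A ⊆ E_m^n(p), writing α := |A| / m^(n−1), one has |N_{Z_m^n}(A, E_m^n(p+1))| ≥ |A| · (1 + (1 − α)/√(ℓ³·m·n)), and the same lower bound holds for |N_{Z_m^n}(A, E_m^n(p−1))|. -/
/-- The discrete torus `Z_m^n`: the graph on `(ZMod m)^n` where two vertices are adjacent
iff they differ by `±1 (mod m)` in exactly one coordinate. -/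
def torus (m n : ℕ) : SimpleGraph (Fin n → ZMod m) :=
  SimpleGraph.fromRel fun u v =>
    ∃ j : Fin n, (u j = v j + 1 ∨ u j = v j - 1) ∧ ∀ i : Fin n, i ≠ j → u i = v i

/-- A set of vertices is independent if its vertices are pairwise non-adjacent. -/
def IsIndep {V : Type*} (G : SimpleGraph V) (s : Set V) : Prop :=
  s.Pairwise fun u v => ¬ G.Adj u v

/-- `N_G(X) := (⋃ x ∈ X, N_G(x)) \ X`. -/
def nbhd {V : Type*} (G : SimpleGraph V) (X : Set V) : Set V :=
  (⋃ x ∈ X, G.neighborSet x) \ X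

/-- `N_G(X, Y) := N_G(X) ∩ Y`. -/
def nbhdIn {V : Type*} (G : SimpleGraph V) (X Y : Set V) : Set V :=
  nbhd G X ∩ Y

/-- `E_m^n(p)`: the vertices of `Z_m^n` whose coordinate sum is `p` modulo `m`. -/
def Eclass (m n : ℕ) (p : ZMod m) : Set (Fin n → ZMod m) :=
  {v | ∑ i, v i = p}

/-- A maximum independent set: an independent set of the largest possible cardinality. -/
def MaxIndep {V : Type*} (G : SimpleGraph V) (s : Set V) : Prop :=
  IsIndep G s ∧ ∀ t : Set V, IsIndep G t → t.ncard ≤ s.ncard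

/-!
Both neighbourhoods are unions of translates `A ± e_j`, and negation exchanges them, so it
suffices to bound `B = ⋃ⱼ (A + e_j)`. Induct on `n`, slicing along the first coordinate: the slice
`B_w` contains `⋃ⱼ (A_w + e_j)` and `A_{w-1}`. With `a_w = |A_w|` and `G = |B| - |A|`, the first
inclusion and the induction hypothesis give `G ≥ ∑_w (a_w - a_w²/m^(n-1)) / √(Kmn)`; the second
gives `a_{w-1} - a_w ≤ |B_w| - |A_w|`, and telescoping around the cycle makes any two `a_w` differ
by at most `G`, so `∑ a_w² ≤ |A|²/m + mG²/2`. The resulting quadratic inequality for `G` implies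
the bound with `√(Km(n+1))` as soon as `m ≤ 4K`, which holds for `K = ℓ³`.
-/

open Finset Pointwise

lemma le_mul_of_le_mul_add_mul_sq {a b c T G : ℝ} (hb : 0 < b) (hc : 0 ≤ c) (hG : 0 ≤ G)
    (hcT : 2 * c * T ≤ b ^ 2 - a ^ 2) (h : T ≤ a * G + c * G ^ 2) : T ≤ b * G := by
  by_contra! hlt
  have hGT : G * b ≤ T := by nlinarith
  nlinarith [sq_nonneg (b - a), mul_le_mul_of_nonneg_left hGT (mul_nonneg hc hG)]

lemma sub_sq_div_div_sqrt_le {m M K d X S G : ℝ} (hm : 0 < m) (hM : 0 < M) (hK : m ≤ 4 * K)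
    (hd : 0 < d) (hG : 0 ≤ G) (hS : (X - S / M) / √(K * m * d) ≤ G)
    (hvar : 2 * m * S ≤ 2 * X ^ 2 + m ^ 2 * G ^ 2) :
    (X - X ^ 2 / (m * M)) / √(K * m * (d + 1)) ≤ G := by
  have hKm : 0 < K * m := mul_pos (by linarith) hm
  set s := √(K * m * d)
  set s' := √(K * m * (d + 1))
  have hs : 0 < s := Real.sqrt_pos.2 (by positivity)
  have hs' : 0 < s' := Real.sqrt_pos.2 (by positivity)
  have hss : s' ^ 2 - s ^ 2 = K * m := by
    rw [Real.sq_sqrt (by positivity), Real.sq_sqrt (by positivity)]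
    ring
  set T := X - X ^ 2 / (m * M)
  have hT : T ≤ s * G + m / (2 * M) * G ^ 2 := by
    have h1 : X - S / M ≤ s * G := by rw [div_le_iff₀ hs] at hS; linarith
    have h2 : S / M - X ^ 2 / (m * M) ≤ m / (2 * M) * G ^ 2 := by
      have e1 : S / M - X ^ 2 / (m * M) = (2 * m * S - 2 * X ^ 2) / (2 * m * M) := by
        field_simp
      have e2 : m / (2 * M) * G ^ 2 = m ^ 2 * G ^ 2 / (2 * m * M) := by field_simp
      rw [e1, e2]
      exact div_le_div_of_nonneg_right (by linarith) (by positivity)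
    linarith
  have hcT : 2 * (m / (2 * M)) * T ≤ s' ^ 2 - s ^ 2 := by
    have hT4 : T ≤ m * M / 4 := by
      have : m * M / 4 - (X - X ^ 2 / (m * M)) = (X - m * M / 2) ^ 2 / (m * M) := by
        field_simp; ring
      linarith [div_nonneg (sq_nonneg (X - m * M / 2)) (by positivity : (0 : ℝ) ≤ m * M)]
    rw [hss]
    calc 2 * (m / (2 * M)) * T ≤ 2 * (m / (2 * M)) * (m * M / 4) :=
          mul_le_mul_of_nonneg_left hT4 (by positivity)
      _ = m * m / 4 := by field_simp
      _ ≤ K * m := by nlinarith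
  rw [div_le_iff₀ hs', mul_comm]
  exact le_mul_of_le_mul_add_mul_sq hs' (by positivity) hG hcT hT

lemma two_mul_card_mul_sum_sq_le {ι : Type*} [Fintype ι] (f : ι → ℝ) {G : ℝ}
    (h : ∀ u v, f u - f v ≤ G) :
    2 * Fintype.card ι * ∑ w, f w ^ 2 ≤ 2 * (∑ w, f w) ^ 2 + Fintype.card ι ^ 2 * G ^ 2 := by
  have hsq : ∀ u v, (f u - f v) ^ 2 ≤ G ^ 2 := fun u v =>
    sq_le_sq' (by linarith [h v u]) (h u v)
  have hexpand : ∑ u, ∑ v, (f u - f v) ^ 2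
      = 2 * Fintype.card ι * ∑ w, f w ^ 2 - 2 * (∑ w, f w) ^ 2 := by
    simp only [sub_sq, sum_add_distrib, sum_sub_distrib, sum_const, card_univ, nsmul_eq_mul,
      ← mul_sum, ← sum_mul]
    ring
  have hbound : ∑ u, ∑ v, (f u - f v) ^ 2 ≤ Fintype.card ι ^ 2 * G ^ 2 := by
    calc ∑ u, ∑ v, (f u - f v) ^ 2 ≤ ∑ _u : ι, ∑ _v : ι, G ^ 2 :=
          sum_le_sum fun u _ => sum_le_sum fun v _ => hsq u v
      _ = Fintype.card ι ^ 2 * G ^ 2 := by simp only [sum_const, card_univ, nsmul_eq_mul]; ring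
  linarith

lemma sub_le_sum_sub_of_pred_le {m : ℕ} [NeZero m] {f g : ZMod m → ℝ} (hle : ∀ w, f w ≤ g w)
    (hpred : ∀ w, f (w - 1) ≤ g w) (u v : ZMod m) : f u - f v ≤ ∑ w, (g w - f w) := by
  set d : ℕ → ZMod m := fun i => u + i + 1
  have telescope : ∀ k : ℕ, f u - f (u + k) ≤ ∑ i ∈ range k, (g (d i) - f (d i)) := by
    intro k
    induction k with
    | zero => simp
    | succ k ih =>
      have hstep := hpred (d k)
      simp only [d, add_sub_cancel_right] at hstep
      rw [sum_range_succ, Nat.cast_succ, ← add_assoc]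
      linarith
  have hinj : Set.InjOn d (range (v - u).val) := by
    intro i hi j hj hij
    have hval := congrArg ZMod.val (add_left_cancel (add_right_cancel hij))
    have hlt : ∀ i ∈ range (v - u).val, i < m := fun i hi =>
      (mem_range.1 hi).trans (ZMod.val_lt _)
    rwa [ZMod.val_natCast_of_lt (hlt i hi), ZMod.val_natCast_of_lt (hlt j hj)] at hval
  calc f u - f v = f u - f (u + (v - u).val) := by rw [ZMod.natCast_zmod_val, add_sub_cancel]
    _ ≤ ∑ i ∈ range (v - u).val, (g (d i) - f (d i)) := telescope _
    _ = ∑ w ∈ (range (v - u).val).image d, (g w - f w) :=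
        (sum_image (f := fun w => g w - f w) hinj).symm
    _ ≤ ∑ w, (g w - f w) := sum_le_univ_sum_of_nonneg fun w => sub_nonneg.2 (hle w)

section Shifts

variable {α ι : Type*} [DecidableEq α] [Fintype ι] [DecidableEq ι]

def shifts [AddZeroClass α] (ε : α) (A : Finset (ι → α)) : Finset (ι → α) :=
  univ.biUnion fun j => A.image (· + Pi.single j ε)

lemma mem_shifts [AddZeroClass α] {ε : α} {A : Finset (ι → α)} {x : ι → α} :
    x ∈ shifts ε A ↔ ∃ j, ∃ a ∈ A, a + Pi.single j ε = x := by
  simp [shifts]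

lemma card_le_card_shifts [AddGroup α] [Nonempty ι] (ε : α) (A : Finset (ι → α)) :
    A.card ≤ (shifts ε A).card := by
  obtain ⟨j⟩ := ‹Nonempty ι›
  calc A.card = (A.image (· + Pi.single j ε)).card :=
        (card_image_of_injective _ (add_left_injective _)).symm
    _ ≤ (shifts ε A).card := card_le_card fun x hx => by
        obtain ⟨a, ha, rfl⟩ := mem_image.1 hx
        exact mem_shifts.2 ⟨j, a, ha, rfl⟩

lemma neg_shifts [AddCommGroup α] (ε : α) (A : Finset (ι → α)) :
    -shifts ε A = shifts (-ε) (-A) := by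
  ext x
  simp only [mem_neg', mem_shifts]
  constructor
  · rintro ⟨j, a, ha, hx⟩
    exact ⟨j, -a, by rwa [neg_neg], by rw [Pi.single_neg, ← neg_add, hx, neg_neg]⟩
  · rintro ⟨j, a, ha, rfl⟩
    exact ⟨j, -a, ha, by rw [Pi.single_neg, neg_add, neg_neg]⟩

end Shifts

section Slices

variable {α : Type*} {n : ℕ}

section AddZeroClass

variable [AddZeroClass α]

lemma cons_add_single_zero (w ε : α) (t : Fin n → α) :
    (Fin.cons w t : Fin (n + 1) → α) + Pi.single 0 ε = Fin.cons (w + ε) t := by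
  ext i
  refine Fin.cases ?_ (fun i => ?_) i <;> simp [Fin.succ_ne_zero]

lemma cons_add_single_succ (w ε : α) (t : Fin n → α) (j : Fin n) :
    (Fin.cons w t : Fin (n + 1) → α) + Pi.single j.succ ε = Fin.cons w (t + Pi.single j ε) := by
  ext i
  refine Fin.cases ?_ (fun i => ?_) i <;> simp [Pi.single_apply]

end AddZeroClass

variable [DecidableEq α]

def headSlice (A : Finset (Fin (n + 1) → α)) (w : α) : Finset (Fin n → α) :=
  (A.filter fun v => v 0 = w).image Fin.tail

lemma mem_headSlice {A : Finset (Fin (n + 1) → α)} {w : α} {t : Fin n → α} :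
    t ∈ headSlice A w ↔ Fin.cons w t ∈ A := by
  constructor
  · intro h
    obtain ⟨v, hv, rfl⟩ := mem_image.1 h
    obtain ⟨hvA, rfl⟩ := mem_filter.1 hv
    rwa [Fin.cons_self_tail]
  · exact fun h => mem_image.2 ⟨_, mem_filter.2 ⟨h, Fin.cons_zero _ _⟩, Fin.tail_cons _ _⟩

lemma card_eq_sum_card_headSlice [Fintype α] (A : Finset (Fin (n + 1) → α)) :
    A.card = ∑ w, (headSlice A w).card := by
  rw [card_eq_sum_card_fiberwise (f := fun v => v 0) (t := univ) fun _ _ => mem_coe.2 (mem_univ _)]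
  refine sum_congr rfl fun w _ => (card_image_of_injOn fun u hu v hv huv => ?_).symm
  rw [← Fin.cons_self_tail u, ← Fin.cons_self_tail v, (mem_filter.1 hu).2, (mem_filter.1 hv).2]
  exact congrArg _ huv

variable [AddGroup α]

lemma headSlice_sub_subset_headSlice_shifts (ε w : α) (A : Finset (Fin (n + 1) → α)) :
    headSlice A (w - ε) ⊆ headSlice (shifts ε A) w := fun t ht => by
  rw [mem_headSlice, mem_shifts]
  exact ⟨0, _, mem_headSlice.1 ht, by rw [cons_add_single_zero, sub_add_cancel]⟩

lemma shifts_headSlice_subset_headSlice_shifts (ε w : α) (A : Finset (Fin (n + 1) → α)) :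
    shifts ε (headSlice A w) ⊆ headSlice (shifts ε A) w := fun t ht => by
  obtain ⟨j, s, hs, rfl⟩ := mem_shifts.1 ht
  rw [mem_headSlice, mem_shifts]
  exact ⟨j.succ, _, mem_headSlice.1 hs, cons_add_single_succ _ _ _ _⟩

end Slices

lemma headSlice_subset_eclass {m n : ℕ} {p : ZMod m} {A : Finset (Fin (n + 1) → ZMod m)}
    (hA : ↑A ⊆ Eclass m (n + 1) p) (w : ZMod m) : ↑(headSlice A w) ⊆ Eclass m n (p - w) :=
  fun t ht => by
    have h : ∑ i, (Fin.cons w t : Fin (n + 1) → ZMod m) i = p := hA (mem_headSlice.1 ht)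
    rw [Fin.sum_cons] at h
    exact eq_sub_of_add_eq' h

lemma card_le_one_of_subset_eclass_one {m : ℕ} {p : ZMod m} {A : Finset (Fin 1 → ZMod m)}
    (hA : ↑A ⊆ Eclass m 1 p) : A.card ≤ 1 :=
  card_le_one.2 fun u hu v hv => funext fun i => by
    have hu' : ∑ i, u i = p := hA hu
    have hv' : ∑ i, v i = p := hA hv
    rw [Fin.sum_univ_one] at hu' hv'
    rw [Subsingleton.elim i 0, hu', hv']

lemma neg_subset_eclass {m n : ℕ} {p : ZMod m} {A : Finset (Fin n → ZMod m)}
    (hA : ↑A ⊆ Eclass m n p) : ↑(-A) ⊆ Eclass m n (-p) := fun v hv => by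
  have h : ∑ i, -v i = p := hA (mem_neg'.1 hv)
  rw [sum_neg_distrib] at h
  exact neg_eq_iff_eq_neg.1 h

lemma eq_add_single_iff {ι α : Type*} [DecidableEq ι] [AddZeroClass α] {u v : ι → α} {j : ι}
    {c : α} : v = u + Pi.single j c ↔ v j = u j + c ∧ ∀ i, i ≠ j → v i = u i := by
  rw [funext_iff]
  refine ⟨fun h => ⟨by simp [h j], fun i hi => by simp [h i, hi]⟩, fun ⟨hj, ho⟩ i => ?_⟩
  by_cases hi : i = j
  · subst hi; simp [hj]
  · simp [ho i hi, hi]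

lemma sum_add_single {ι α : Type*} [Fintype ι] [DecidableEq ι] [AddCommMonoid α] (v : ι → α)
    (j : ι) (c : α) : ∑ i, (v + Pi.single j c : ι → α) i = ∑ i, v i + c := by
  simp [sum_add_distrib]

lemma torus_adj_iff {m n : ℕ} [Fact (1 < m)] {u v : Fin n → ZMod m} :
    (torus m n).Adj u v ↔ ∃ j c, (c = 1 ∨ c = -1) ∧ v = u + Pi.single j c := by
  simp only [torus, SimpleGraph.fromRel_adj, eq_add_single_iff]
  constructor
  · rintro ⟨-, ⟨j, hj, ho⟩ | ⟨j, hj, ho⟩⟩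
    · refine ⟨j, v j - u j, ?_, by ring, fun i hi => (ho i hi).symm⟩
      rcases hj with h | h
      exacts [Or.inr (by rw [h]; ring), Or.inl (by rw [h]; ring)]
    · refine ⟨j, v j - u j, ?_, by ring, ho⟩
      rcases hj with h | h
      exacts [Or.inl (by rw [h]; ring), Or.inr (by rw [h]; ring)]
  · rintro ⟨j, c, hc, hj, ho⟩
    refine ⟨fun huv => ?_, Or.inr ⟨j, ?_, ho⟩⟩
    · rw [huv, left_eq_add] at hj
      rcases hc with rfl | rfl <;> simp at hj
    · rcases hc with rfl | rfl
      exacts [Or.inl hj, Or.inr (by rw [hj, sub_eq_add_neg])]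

lemma nbhdIn_torus_eclass_add {m n : ℕ} [Fact (1 < m)] {ε : ZMod m} (hε : ε = 1 ∨ ε = -1)
    {p : ZMod m} {A : Finset (Fin n → ZMod m)} (hA : ↑A ⊆ Eclass m n p) :
    nbhdIn (torus m n) ↑A (Eclass m n (p + ε)) = ↑(shifts ε A) := by
  have hε0 : ε ≠ 0 := by rcases hε with rfl | rfl <;> simp
  ext x
  simp only [nbhdIn, nbhd, Set.mem_inter_iff, Set.mem_sdiff, Set.mem_iUnion₂,
    SimpleGraph.mem_neighborSet, torus_adj_iff, mem_coe, mem_shifts, Eclass, Set.mem_ofPred_eq]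
  constructor
  · rintro ⟨⟨⟨a, ha, j, c, -, rfl⟩, -⟩, hx⟩
    rw [sum_add_single, hA ha] at hx
    exact ⟨j, a, ha, by rw [add_left_cancel hx]⟩
  · rintro ⟨j, a, ha, rfl⟩
    have hx : ∑ i, (a + Pi.single j ε : Fin n → ZMod m) i = p + ε := by
      rw [sum_add_single, hA ha]
    refine ⟨⟨⟨a, ha, j, ε, hε, rfl⟩, fun hxA => hε0 ?_⟩, hx⟩
    rwa [hA hxA, left_eq_add] at hx

def ShiftBound (m : ℕ) (K : ℝ) (n : ℕ) : Prop :=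
  ∀ (p : ZMod m) (A : Finset (Fin n → ZMod m)), ↑A ⊆ Eclass m n p →
    (A.card : ℝ) * (1 + (1 - A.card / (m : ℝ) ^ (n - 1)) / √(K * m * n)) ≤ (shifts 1 A).card

lemma shiftBound_one (m : ℕ) (K : ℝ) : ShiftBound m K 1 := by
  intro p A hA
  have hcard : (A.card : ℝ) * (1 - A.card) = 0 := by
    rcases Nat.le_one_iff_eq_zero_or_eq_one.1 (card_le_one_of_subset_eclass_one hA) with h | h <;>
      simp [h]
  calc (A.card : ℝ) * (1 + (1 - A.card / (m : ℝ) ^ (1 - 1)) / √(K * m * (1 : ℕ)))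
      = A.card + A.card * (1 - A.card) / √(K * m * (1 : ℕ)) := by
        rw [Nat.sub_self, pow_zero, div_one]; ring
    _ ≤ (shifts 1 A).card := by
      rw [hcard, zero_div, add_zero]
      exact_mod_cast card_le_card_shifts 1 A

lemma ShiftBound.succ {m : ℕ} [NeZero m] {K : ℝ} (hK : (m : ℝ) ≤ 4 * K) {n : ℕ} (hn : 1 ≤ n)
    (ih : ShiftBound m K n) : ShiftBound m K (n + 1) := by
  intro p A hA
  have : Nonempty (Fin n) := ⟨⟨0, hn⟩⟩
  set B := shifts 1 A
  set a : ZMod m → ℝ := fun w => (headSlice A w).card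
  set b : ZMod m → ℝ := fun w => (headSlice B w).card
  set X : ℝ := (A.card : ℝ)
  set G : ℝ := ∑ w, (b w - a w)
  set M : ℝ := (m : ℝ) ^ (n - 1)
  have hX : X = ∑ w, a w := by simp only [X, a, card_eq_sum_card_headSlice A, Nat.cast_sum]
  have hB : (B.card : ℝ) = X + G := by
    simp only [G, sum_sub_distrib, ← hX, b, card_eq_sum_card_headSlice B, Nat.cast_sum]; ring
  have hle : ∀ w, a w ≤ b w := fun w => by
    simp only [a, b]
    exact_mod_cast (card_le_card_shifts 1 _).trans
      (card_le_card (shifts_headSlice_subset_headSlice_shifts 1 w A))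
  have hpred : ∀ w, a (w - 1) ≤ b w := fun w => by
    simp only [a, b]
    exact_mod_cast card_le_card (headSlice_sub_subset_headSlice_shifts 1 w A)
  have hslice : ∀ w, a w * (1 + (1 - a w / M) / √(K * m * n)) ≤ b w := fun w =>
    (ih _ _ (headSlice_subset_eclass hA w)).trans
      (by simp only [b]; exact_mod_cast card_le_card (shifts_headSlice_subset_headSlice_shifts ..))
  have hsum : (X - (∑ w, a w ^ 2) / M) / √(K * m * n) ≤ G := by
    have hexp : ∑ w, a w * (1 + (1 - a w / M) / √(K * m * n))
        = X + (X - (∑ w, a w ^ 2) / M) / √(K * m * n) := by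
      rw [hX, sum_div, ← sum_sub_distrib, sum_div, ← sum_add_distrib]
      exact sum_congr rfl fun w _ => by ring
    have hY : ∑ w, b w = X + G := by rw [hX, ← sum_add_distrib]; simp
    rw [← add_le_add_iff_left X, ← hexp, ← hY]
    exact sum_le_sum fun w _ => hslice w
  have hvar : 2 * m * ∑ w, a w ^ 2 ≤ 2 * X ^ 2 + m ^ 2 * G ^ 2 := by
    simpa only [ZMod.card, ← hX] using
      two_mul_card_mul_sum_sq_le a (sub_le_sum_sub_of_pred_le hle hpred)
  have hm : (0 : ℝ) < m := by exact_mod_cast Nat.pos_of_neZero m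
  have hpow : (m : ℝ) ^ (n + 1 - 1) = m * M := by
    rw [Nat.add_sub_cancel, ← pow_succ', Nat.sub_add_cancel hn]
  calc X * (1 + (1 - X / (m : ℝ) ^ (n + 1 - 1)) / √(K * m * (n + 1 : ℕ)))
      = X + (X - X ^ 2 / (m * M)) / √(K * m * (n + 1)) := by rw [hpow]; push_cast; ring
    _ ≤ X + G := add_le_add_right (sub_sq_div_div_sqrt_le hm (by positivity) hK
        (by exact_mod_cast hn) (sum_nonneg fun w _ => sub_nonneg.2 (hle w)) hsum hvar) X
    _ = B.card := hB.symm

lemma shiftBound_of_le_four_mul {m : ℕ} [NeZero m] {K : ℝ} (hK : (m : ℝ) ≤ 4 * K) {n : ℕ}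
    (hn : 1 ≤ n) : ShiftBound m K n := by
  induction n, hn using Nat.le_induction with
  | base => exact shiftBound_one m K
  | succ n hn ih => exact ih.succ hK hn

lemma natCast_le_four_mul_half_cube {m : ℕ} (hm : 2 ≤ m) :
    (m : ℝ) ≤ 4 * ((m / 2 : ℕ) : ℝ) ^ 3 := by
  have h : m / 2 ≤ (m / 2) ^ 3 := Nat.le_self_pow (by norm_num) _
  exact_mod_cast (by omega : m ≤ 4 * (m / 2) ^ 3)

theorem stmt_2_general (m n : ℕ) (hm : 3 ≤ m) (hn : 1 ≤ n) (p : ZMod m)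
    (A : Set (Fin n → ZMod m)) (hA : A ⊆ Eclass m n p) :
    (A.ncard : ℝ) * (1 + (1 - (A.ncard : ℝ) / (m : ℝ) ^ (n - 1)) /
        Real.sqrt (((m / 2 : ℕ) : ℝ) ^ 3 * m * n)) ≤
      ((nbhdIn (torus m n) A (Eclass m n (p + 1))).ncard : ℝ) ∧
    (A.ncard : ℝ) * (1 + (1 - (A.ncard : ℝ) / (m : ℝ) ^ (n - 1)) /
        Real.sqrt (((m / 2 : ℕ) : ℝ) ^ 3 * m * n)) ≤
      ((nbhdIn (torus m n) A (Eclass m n (p - 1))).ncard : ℝ) := by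
  have : Fact (1 < m) := ⟨by omega⟩
  obtain ⟨F, rfl⟩ := A.toFinite.exists_finset_coe
  have hbound := shiftBound_of_le_four_mul (natCast_le_four_mul_half_cube (m := m) (by omega)) hn
  have hminus := hbound (-p) (-F) (neg_subset_eclass hA)
  rw [card_neg] at hminus
  rw [sub_eq_add_neg p 1, nbhdIn_torus_eclass_add (Or.inl rfl) hA,
    nbhdIn_torus_eclass_add (Or.inr rfl) hA, Set.ncard_coe_finset, Set.ncard_coe_finset,
    Set.ncard_coe_finset, ← card_neg (shifts (-1) F), neg_shifts, neg_neg]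
  exact ⟨hbound p F hA, hminus⟩

/-- Isoperimetric inequality: for `A ⊆ E_m^n(p)` with `α := |A|/m^(n-1)`, the neighbourhood
of `A` in `E_m^n(p ± 1)` has size at least `|A| · (1 + (1-α)/√(ℓ³mn))` where `ℓ = ⌊m/2⌋`. -/
theorem stmt_2 (m n : ℕ) (hm : 3 ≤ m) (hmo : Odd m) (hn : 1 ≤ n) (p : ZMod m)
    (A : Set (Fin n → ZMod m)) (hA : A ⊆ Eclass m n p) :
    (A.ncard : ℝ) * (1 + (1 - (A.ncard : ℝ) / (m : ℝ) ^ (n - 1)) /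
        Real.sqrt (((m / 2 : ℕ) : ℝ) ^ 3 * m * n)) ≤
      ((nbhdIn (torus m n) A (Eclass m n (p + 1))).ncard : ℝ) ∧
    (A.ncard : ℝ) * (1 + (1 - (A.ncard : ℝ) / (m : ℝ) ^ (n - 1)) /
        Real.sqrt (((m / 2 : ℕ) : ℝ) ^ 3 * m * n)) ≤
      ((nbhdIn (torus m n) A (Eclass m n (p - 1))).ncard : ℝ) :=
  stmt_2_general m n hm hn p A hA
end

section
/- For all m, n ∈ ℕ with m ≥ 2, every independent set I of the discrete torus Z_m^n satisfies |I| ≤ m^(n−1) · ⌊m/2⌋. -/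
/-- An independent set in the cycle `ZMod m` has at most `⌊m/2⌋` elements. -/
lemma cycle_bound {m : ℕ} (hm : 2 ≤ m) (S : Finset (ZMod m))
    (h : ∀ a ∈ S, ∀ b ∈ S, a ≠ b + 1) : S.card ≤ m / 2 := by
  haveI : NeZero m := ⟨by omega⟩
  have hdisj : Disjoint S (S.image (· + 1)) := by
    rw [Finset.disjoint_right]
    intro a ha
    obtain ⟨b, hb, rfl⟩ := Finset.mem_image.mp ha
    intro hs
    exact h _ hs _ hb rfl
  have hcardim : (S.image (· + 1)).card = S.card :=
    Finset.card_image_of_injective _ (add_left_injective 1)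
  have hle : S.card + S.card ≤ Fintype.card (ZMod m) := by
    calc S.card + S.card = (S ∪ S.image (· + 1)).card := by
          rw [Finset.card_union_of_disjoint hdisj, hcardim]
    _ ≤ Fintype.card (ZMod m) := Finset.card_le_univ _
  rw [ZMod.card] at hle
  omega

/-- Every independent set `I` of `Z_m^n` (with `m ≥ 2`) satisfies `|I| ≤ m^(n-1)·⌊m/2⌋`. -/
theorem stmt_3 (m n : ℕ) (hm : 2 ≤ m) (hn : 1 ≤ n)
    (I : Set (Fin n → ZMod m)) (hI : IsIndep (torus m n) I) :
    I.ncard ≤ m ^ (n - 1) * (m / 2) := by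
  haveI : NeZero m := ⟨by omega⟩
  haveI : Fact (1 < m) := ⟨by omega⟩
  obtain ⟨n', rfl⟩ : ∃ n', n = n' + 1 := ⟨n - 1, by omega⟩
  classical
  have hfin : I.Finite := Set.toFinite I
  rw [Set.ncard_eq_toFinset_card _ hfin]
  set J := hfin.toFinset with hJdef
  have hsum : J.card = ∑ t : Fin n' → ZMod m,
      (J.filter (fun v => Fin.tail v = t)).card :=
    Finset.card_eq_sum_card_fiberwise (fun v _ => Finset.mem_univ (Fin.tail v))
  have hfiber : ∀ t : Fin n' → ZMod m,
      (J.filter (fun v => Fin.tail v = t)).card ≤ m / 2 := by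
    intro t
    set F := J.filter (fun v => Fin.tail v = t) with hFdef
    have hmemF : ∀ v ∈ F, v ∈ I ∧ Fin.tail v = t := by
      intro v hv
      rw [hFdef, Finset.mem_filter] at hv
      exact ⟨hfin.mem_toFinset.mp hv.1, hv.2⟩
    have hcardS : F.card = (F.image (fun v => v 0)).card := by
      rw [Finset.card_image_of_injOn]
      intro v hv w hw hvw
      have hv' := (hmemF v hv).2
      have hw' := (hmemF w hw).2
      funext i
      rcases Fin.eq_zero_or_eq_succ i with rfl | ⟨k, rfl⟩
      · exact hvw
      · have : Fin.tail v k = Fin.tail w k := by rw [hv', hw']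
        exact this
    rw [hcardS]
    apply cycle_bound hm
    intro a ha b hb hab
    obtain ⟨v, hv, rfl⟩ := Finset.mem_image.mp ha
    obtain ⟨w, hw, rfl⟩ := Finset.mem_image.mp hb
    have h1 : (1 : ZMod m) ≠ 0 := one_ne_zero
    have hvw : v ≠ w := by
      intro h; apply h1
      rw [h] at hab
      have := (left_eq_add (a := w 0)).mp hab
      exact this
    have htails : ∀ i : Fin (n' + 1), i ≠ 0 → v i = w i := by
      intro i hi
      obtain ⟨k, rfl⟩ := (Fin.eq_zero_or_eq_succ i).resolve_left hi
      have hv' := (hmemF v hv).2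
      have hw' := (hmemF w hw).2
      have : Fin.tail v k = Fin.tail w k := by rw [hv', hw']
      exact this
    have hadj : (torus m (n' + 1)).Adj v w := by
      rw [torus, SimpleGraph.fromRel_adj]
      exact ⟨hvw, Or.inl ⟨0, Or.inl hab, htails⟩⟩
    exact hI (hmemF v hv).1 (hmemF w hw).1 hvw hadj
  calc J.card = ∑ t : Fin n' → ZMod m, (J.filter (fun v => Fin.tail v = t)).card := hsum
    _ ≤ ∑ _t : Fin n' → ZMod m, (m / 2) := Finset.sum_le_sum (fun t _ => hfiber t)
    _ = Fintype.card (Fin n' → ZMod m) * (m / 2) := by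
        rw [Finset.sum_const, Finset.card_univ, smul_eq_mul]
    _ = m ^ (n' + 1 - 1) * (m / 2) := by
        rw [Fintype.card_fun, ZMod.card, Fintype.card_fin, Nat.add_sub_cancel]
end

section
/- For m, n ∈ ℕ with m ≥ 3 odd, the map ι_n : ZMod m × {±1}^(n−1) → 2^((ZMod m)^n) given by ι_n(q, ε_1, …, ε_{n−1}) := {v ∈ (ZMod m)^n : v_1 + Σ_{i=1}^{n−1} ε_i v_{i+1} ∈ {q, q+2, …, q+m−3} (mod m)} is injective, and every set in its image is a maximum independent set of the discrete torus Z_m^n (i.e., an independent set of the maximum possible cardinality). -/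
/-- The map `ι_n`: `ι_n(q, ε₁, …, ε_{n−1})` is the set of vertices `v` of `Z_m^n` with
`v₁ + Σ_{i=1}^{n-1} ε_i v_{i+1} ∈ {q, q+2, …, q+m−3} (mod m)` (for odd `m`, this set of
residues is `{q + 2j : 0 ≤ j < ⌊m/2⌋}`). -/
def iota (m n : ℕ) (q : ZMod m) (ε : Fin (n - 1) → ℤˣ) : Set (Fin n → ZMod m) :=
  {v | ∃ j : ℕ, j < m / 2 ∧
    (∑ i : Fin n, (if _h : i.1 = 0 then (1 : ZMod m)
        else (((ε ⟨i.1 - 1, by have := i.isLt; omega⟩ : ℤˣ) : ℤ) : ZMod m)) * v i)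
      = q + 2 * (j : ZMod m)}

/-!
The linear form `f_ε(v) = v₁ + Σ ε_i v_{i+1}` has coefficients `±1`, so it changes by exactly `±1`
along every edge of the torus. Since `m` is odd, the residues `q, q+2, …, q+m-3` contain no two
consecutive ones, so `ι(q, ε) = f_ε⁻¹{q, q+2, …, q+m-3}` is independent; as the coefficient of `v₁`
is `1`, every fibre of `f_ε` has `m^(n-1)` points, so `|ι(q, ε)| = ⌊m/2⌋ m^(n-1)`. Conversely, each
line parallel to the first axis is an `m`-cycle and meets an independent set in at most `⌊m/2⌋`
points, which gives the matching upper bound. For injectivity, the vertices `x e₁` recover the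
residue set and hence `q`, its only element `x` with `x - 2` outside it; and `(q-1) e₁ + ε_i e_{i+1}`
lies in `ι(q, ε)` but not in `ι(q, ε')` when `ε'_i = -ε_i`.
-/

open Finset

section Residues

variable {m : ℕ}

def alternateResidues (m : ℕ) (q : ZMod m) : Finset (ZMod m) :=
  (range (m / 2)).image fun j : ℕ => q + 2 * (j : ZMod m)

lemma mem_alternateResidues {q x : ZMod m} :
    x ∈ alternateResidues m q ↔ ∃ j < m / 2, x = q + 2 * (j : ZMod m) := by
  simp [alternateResidues, eq_comm]

lemma natCast_eq_natCast_of_lt {a b : ℕ} (ha : a < m) (hb : b < m)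
    (h : (a : ZMod m) = b) : a = b := by
  rw [← ZMod.val_natCast_of_lt ha, ← ZMod.val_natCast_of_lt hb, h]

lemma card_alternateResidues (q : ZMod m) : #(alternateResidues m q) = m / 2 := by
  rw [alternateResidues, card_image_of_injOn, card_range]
  intro j hj j' hj' h
  simp only [coe_range, Set.mem_Iio] at hj hj'
  have h2 : ((2 * j : ℕ) : ZMod m) = (2 * j' : ℕ) := by push_cast; linear_combination h
  have := natCast_eq_natCast_of_lt (by omega) (by omega) h2
  omega

lemma self_mem_alternateResidues (hm : 2 ≤ m) (q : ZMod m) : q ∈ alternateResidues m q :=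
  mem_alternateResidues.2 ⟨0, by omega, by simp⟩

lemma sub_two_notMem_alternateResidues (hmo : Odd m) (q : ZMod m) :
    q - 2 ∉ alternateResidues m q := by
  rw [mem_alternateResidues]
  rintro ⟨j, hj, h⟩
  obtain ⟨l, rfl⟩ := hmo
  have h2 : ((2 * j + 2 : ℕ) : ZMod (2 * l + 1)) = (0 : ℕ) := by push_cast; linear_combination -h
  have := natCast_eq_natCast_of_lt (by omega) (by omega) h2
  omega

lemma add_one_notMem_alternateResidues (hmo : Odd m) {q x : ZMod m}
    (hx : x ∈ alternateResidues m q) : x + 1 ∉ alternateResidues m q := by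
  obtain ⟨j, hj, rfl⟩ := mem_alternateResidues.1 hx
  rw [mem_alternateResidues]
  rintro ⟨j', hj', h⟩
  obtain ⟨l, rfl⟩ := hmo
  have h2 : ((2 * j + 1 : ℕ) : ZMod (2 * l + 1)) = (2 * j' : ℕ) := by
    push_cast; linear_combination h
  have := natCast_eq_natCast_of_lt (by omega) (by omega) h2
  omega

lemma alternateResidues_injective (hm : 2 ≤ m) (hmo : Odd m) :
    Function.Injective (alternateResidues m) := by
  intro q q' h
  obtain ⟨j, hj, hq⟩ := mem_alternateResidues.1 (h ▸ self_mem_alternateResidues hm q)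
  cases j with
  | zero => simpa using hq
  | succ j =>
    refine absurd (h ▸ mem_alternateResidues.2 ⟨j, by omega, ?_⟩)
      (sub_two_notMem_alternateResidues hmo q)
    rw [hq]; push_cast; ring

lemma card_le_half_of_add_one_notMem [NeZero m] (X : Finset (ZMod m))
    (hX : ∀ x ∈ X, x + 1 ∉ X) : #X ≤ m / 2 := by
  have hdisj : Disjoint X (X.image (· + 1)) := by
    simp only [disjoint_right, mem_image]
    rintro _ ⟨x, hx, rfl⟩
    exact hX x hx
  have : 2 * #X ≤ m := by
    calc 2 * #X = #(X ∪ X.image (· + 1)) := by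
          rw [card_union_of_disjoint hdisj, card_image_of_injective _ (add_left_injective 1)]
          ring
      _ ≤ m := by simpa [ZMod.card] using card_le_univ (X ∪ X.image (· + 1))
  omega

end Residues

section Torus

variable {m n : ℕ}

lemma exists_eq_add_single_of_torus_adj {u v : Fin n → ZMod m} (h : (torus m n).Adj u v) :
    ∃ j s, (s = 1 ∨ s = -1) ∧ u = v + Pi.single j s := by
  have key : ∀ {u v : Fin n → ZMod m} (j : Fin n), (u j = v j + 1 ∨ u j = v j - 1) →
      (∀ i, i ≠ j → u i = v i) → ∃ j s, (s = 1 ∨ s = -1) ∧ u = v + Pi.single j s := by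
    intro u v j hj hrest
    refine ⟨j, u j - v j, by rcases hj with h | h <;> simp [h], funext fun i => ?_⟩
    by_cases hi : i = j
    · subst hi; simp
    · simp [hi, hrest i hi]
  rw [torus, SimpleGraph.fromRel_adj] at h
  obtain ⟨-, ⟨j, hj, hrest⟩ | ⟨j, hj, hrest⟩⟩ := h
  · exact key j hj hrest
  · obtain ⟨j, s, hs, rfl⟩ := key j hj hrest
    exact ⟨j, -s, by rcases hs with rfl | rfl <;> simp, by simp [Pi.single_neg]⟩

lemma torus_adj_cons_add_one (hm : 1 < m) (x : ZMod m) (w : Fin n → ZMod m) :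
    (torus m (n + 1)).Adj (Fin.cons (x + 1) w) (Fin.cons x w) := by
  have : Fact (1 < m) := ⟨hm⟩
  rw [torus, SimpleGraph.fromRel_adj]
  refine ⟨by simp, Or.inl ⟨0, by simp, fun i hi => ?_⟩⟩
  obtain ⟨i, rfl⟩ := Fin.exists_succ_eq.2 hi
  simp

lemma isIndep_torus_preimage_dotProduct {c : Fin n → ZMod m} (hc : ∀ i, c i = 1 ∨ c i = -1)
    {R : Finset (ZMod m)} (hR : ∀ x ∈ R, x + 1 ∉ R) :
    IsIndep (torus m n) {v | c ⬝ᵥ v ∈ R} := by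
  intro u hu v hv _ huv
  obtain ⟨j, s, hs, rfl⟩ := exists_eq_add_single_of_torus_adj huv
  simp only [Set.mem_ofPred_eq, dotProduct_add, dotProduct_single] at hu hv
  have hcs : c j * s = 1 ∨ c j * s = -1 := by
    rcases hc j with h | h <;> rcases hs with rfl | rfl <;> simp [h]
  rcases hcs with h | h
  · exact hR _ hv (h ▸ hu)
  · exact hR _ (h ▸ hu) (by simpa using hv)

lemma card_filter_dotProduct_eq [NeZero m] {c : Fin n → ZMod m} {i₀ : Fin n}
    (hc : IsUnit (c i₀)) (x : ZMod m) : #{v | c ⬝ᵥ v = x} = m ^ (n - 1) := by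
  let f : (Fin n → ZMod m) →+ ZMod m := AddMonoidHom.mk' (c ⬝ᵥ ·) (dotProduct_add c)
  have hsurj : ∀ y, y ∈ Set.range f := fun y =>
    ⟨Pi.single i₀ (↑hc.unit⁻¹ * y), by simp [f, dotProduct_single, ← mul_assoc]⟩
  have hfibre : ∀ y, #{v | f v = y} = #{v | f v = x} := fun y =>
    AddMonoidHom.card_fiber_eq_of_mem_range f (hsurj y) (hsurj x)
  have : m * #{v | f v = x} = m * m ^ (n - 1) := by
    calc m * #{v | f v = x} = ∑ y : ZMod m, #{v | f v = y} := by simp [hfibre, ZMod.card]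
      _ = m ^ n := by rw [sum_card_fiberwise_eq_card_filter]; simp
      _ = m * m ^ (n - 1) := by rw [← pow_succ', Nat.sub_add_cancel i₀.pos]
  exact Nat.eq_of_mul_eq_mul_left (NeZero.pos m) this

lemma card_filter_dotProduct_mem [NeZero m] {c : Fin n → ZMod m} {i₀ : Fin n}
    (hc : IsUnit (c i₀)) (R : Finset (ZMod m)) :
    #{v | c ⬝ᵥ v ∈ R} = #R * m ^ (n - 1) := by
  rw [← sum_card_fiberwise_eq_card_filter]
  simp [card_filter_dotProduct_eq hc]

lemma ncard_le_of_isIndep_torus (hm : 1 < m) (hn : 1 ≤ n) {t : Set (Fin n → ZMod m)}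
    (ht : IsIndep (torus m n) t) : t.ncard ≤ m / 2 * m ^ (n - 1) := by
  have : NeZero m := ⟨by omega⟩
  obtain ⟨k, rfl⟩ := Nat.exists_eq_add_of_le' hn
  rw [Set.ncard_eq_toFinset_card t t.toFinite, Nat.add_sub_cancel]
  set s := t.toFinite.toFinset
  have hs : IsIndep (torus m (k + 1)) (s : Set _) := by rwa [Set.Finite.coe_toFinset]
  have := card_le_mul_card_image_of_maps_to (f := fun v : Fin (k + 1) → ZMod m => Fin.tail v)
    (s := s) (t := univ) (by simp) (m / 2) ?_
  · simpa using this
  intro w _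
  have hinj : Set.InjOn (fun v : Fin (k + 1) → ZMod m => v 0) ↑({v ∈ s | Fin.tail v = w}) := by
    intro u hu v hv (h : u 0 = v 0)
    simp only [coe_filter, Set.mem_ofPred_eq] at hu hv
    rw [← Fin.cons_self_tail u, ← Fin.cons_self_tail v, hu.2, hv.2, h]
  rw [← card_image_of_injOn hinj]
  refine card_le_half_of_add_one_notMem _ ?_
  simp only [mem_image, mem_filter]
  rintro _ ⟨u, ⟨hu, hut⟩, rfl⟩ ⟨v, ⟨hv, hvt⟩, hv0⟩
  have hadj : (torus m (k + 1)).Adj v u := by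
    rw [← Fin.cons_self_tail v, ← Fin.cons_self_tail u, hv0, hvt, hut]
    exact torus_adj_cons_add_one hm (u 0) w
  exact hs hv hu hadj.ne hadj

lemma eq_of_preimage_dotProduct_alternateResidues_eq (hm : 2 ≤ m) (hmo : Odd m)
    {c c' : Fin n → ZMod m} {i₀ : Fin n} (hc₀ : c i₀ = 1) (hc₀' : c' i₀ = 1)
    (hc : ∀ i, c i = 1 ∨ c i = -1) (hc' : ∀ i, c' i = 1 ∨ c' i = -1) {q q' : ZMod m}
    (h : {v | c ⬝ᵥ v ∈ alternateResidues m q} = {v | c' ⬝ᵥ v ∈ alternateResidues m q'}) :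
    q = q' ∧ c = c' := by
  have hmem v : c ⬝ᵥ v ∈ alternateResidues m q ↔ c' ⬝ᵥ v ∈ alternateResidues m q' :=
    Set.ext_iff.1 h v
  obtain rfl : q = q' := alternateResidues_injective hm hmo <| Finset.ext fun x => by
    simpa [dotProduct_single, hc₀, hc₀'] using hmem (Pi.single i₀ x)
  refine ⟨rfl, funext fun p => ?_⟩
  by_contra hne
  have hneg : c' p = -c p := by
    rcases hc p with h | h <;> rcases hc' p with h' | h' <;> simp_all
  have hsq : c p * c p = 1 := by rcases hc p with h | h <;> simp [h]
  have := hmem (Pi.single i₀ (q - 1) + Pi.single p (c p))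
  simp only [dotProduct_add, dotProduct_single, hc₀, hc₀', hneg, neg_mul, hsq, one_mul,
    sub_add_cancel, ← sub_eq_add_neg, sub_sub, one_add_one_eq_two] at this
  exact sub_two_notMem_alternateResidues hmo q (this.1 (self_mem_alternateResidues hm q))

end Torus

section Iota

variable {m n : ℕ}

def iotaCoeff (m n : ℕ) (ε : Fin (n - 1) → ℤˣ) (i : Fin n) : ZMod m :=
  if _h : i.1 = 0 then 1 else ((ε ⟨i.1 - 1, by have := i.isLt; omega⟩ : ℤ) : ZMod m)

lemma iota_eq_preimage (q : ZMod m) (ε : Fin (n - 1) → ℤˣ) :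
    iota m n q ε = {v | iotaCoeff m n ε ⬝ᵥ v ∈ alternateResidues m q} := by
  ext v
  simp only [Set.mem_ofPred_eq, mem_alternateResidues]
  rfl

lemma iotaCoeff_zero (hn : 1 ≤ n) (ε : Fin (n - 1) → ℤˣ) : iotaCoeff m n ε ⟨0, hn⟩ = 1 := by
  simp [iotaCoeff]

lemma iotaCoeff_eq_one_or_neg_one (ε : Fin (n - 1) → ℤˣ) (i : Fin n) :
    iotaCoeff m n ε i = 1 ∨ iotaCoeff m n ε i = -1 := by
  unfold iotaCoeff
  split_ifs
  · exact Or.inl rfl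
  · rcases Int.units_eq_one_or (ε ⟨i.1 - 1, by omega⟩) with h | h <;> simp [h]

lemma iotaCoeff_injective (hm : 2 < m) : Function.Injective (iotaCoeff m n) := by
  have : Fact (2 < m) := ⟨hm⟩
  intro ε ε' h
  funext i
  have hi := congrFun h ⟨i + 1, by omega⟩
  simp only [iotaCoeff, Nat.add_sub_cancel, Fin.eta, add_eq_zero, one_ne_zero, and_false,
    dite_false] at hi
  rcases Int.units_eq_one_or (ε i) with h | h <;> rcases Int.units_eq_one_or (ε' i) with h' | h' <;>
    simp_all [ZMod.neg_one_ne_one, ZMod.neg_one_ne_one.symm]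

lemma isIndep_iota (hmo : Odd m) (q : ZMod m) (ε : Fin (n - 1) → ℤˣ) :
    IsIndep (torus m n) (iota m n q ε) := by
  rw [iota_eq_preimage]
  exact isIndep_torus_preimage_dotProduct (iotaCoeff_eq_one_or_neg_one ε)
    fun _ hx => add_one_notMem_alternateResidues hmo hx

lemma ncard_iota [NeZero m] (hn : 1 ≤ n) (q : ZMod m) (ε : Fin (n - 1) → ℤˣ) :
    (iota m n q ε).ncard = m / 2 * m ^ (n - 1) := by
  rw [iota_eq_preimage, Set.ncard_eq_toFinset_card', Set.toFinset_ofPred,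
    card_filter_dotProduct_mem (by rw [iotaCoeff_zero hn]; exact isUnit_one),
    card_alternateResidues]

lemma iota_injective (hm : 3 ≤ m) (hmo : Odd m) (hn : 1 ≤ n) :
    Function.Injective fun x : ZMod m × (Fin (n - 1) → ℤˣ) => iota m n x.1 x.2 := by
  rintro ⟨q, ε⟩ ⟨q', ε'⟩ h
  simp only [iota_eq_preimage] at h
  obtain ⟨rfl, hc⟩ := eq_of_preimage_dotProduct_alternateResidues_eq (by omega) hmo
    (iotaCoeff_zero hn ε) (iotaCoeff_zero hn ε') (iotaCoeff_eq_one_or_neg_one ε)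
    (iotaCoeff_eq_one_or_neg_one ε') h
  rw [iotaCoeff_injective (by omega) hc]

end Iota

/-- For `m ≥ 3` odd, the map `ι_n` is injective and every set in its image is a
maximum independent set of `Z_m^n`. -/
theorem stmt_4 (m n : ℕ) (hm : 3 ≤ m) (hmo : Odd m) (hn : 1 ≤ n) :
    Function.Injective (fun x : ZMod m × (Fin (n - 1) → ℤˣ) => iota m n x.1 x.2) ∧
    ∀ (q : ZMod m) (ε : Fin (n - 1) → ℤˣ), MaxIndep (torus m n) (iota m n q ε) := by
  have : NeZero m := ⟨by omega⟩
  refine ⟨iota_injective hm hmo hn, fun q ε => ⟨isIndep_iota hmo q ε, fun t ht => ?_⟩⟩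
  rw [ncard_iota hn q ε]
  exact ncard_le_of_isIndep_torus (by omega) hn ht
end

section
/- For m, n ∈ ℕ with m ≥ 3 odd, let x = (q, ε_1, …, ε_{n−1}) and x' = (q', ε'_1, …, ε'_{n−1}) be elements of ZMod m × {±1}^(n−1). If ι_n(x) ∩ ι_n(x') = ∅, then q' ≡ q + 1 (mod m) or q' ≡ q − 1 (mod m), and ε_j = ε'_j for all j ∈ {1, …, n−1}. -/
def co (m n : ℕ) (ε : Fin (n - 1) → ℤˣ) (i : Fin n) : ZMod m :=
  if _h : i.1 = 0 then (1 : ZMod m)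
  else (((ε ⟨i.1 - 1, by have := i.isLt; omega⟩ : ℤˣ) : ℤ) : ZMod m)

lemma mem_iota (m n : ℕ) (q : ZMod m) (ε : Fin (n-1) → ℤˣ) (v : Fin n → ZMod m) :
    v ∈ iota m n q ε ↔ ∃ j : ℕ, j < m / 2 ∧ ∑ i, co m n ε i * v i = q + 2 * (j : ZMod m) :=
  Iff.rfl

lemma sum_co_single (m n : ℕ) (ε : Fin (n-1) → ℤˣ) (i0 : Fin n) (x : ZMod m) :
    ∑ i, co m n ε i * (Pi.single i0 x : Fin n → ZMod m) i = co m n ε i0 * x := by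
  rw [Fintype.sum_eq_single i0]
  · simp
  · intro b hb; simp [Pi.single_eq_of_ne hb]

/-- If `ι_n(q, ε) ∩ ι_n(q', ε') = ∅`, then `q' ≡ q ± 1 (mod m)` and `ε_j = ε'_j`
for all `j`. -/
theorem stmt_5 (m n : ℕ) (hm : 3 ≤ m) (hmo : Odd m) (hn : 1 ≤ n)
    (q q' : ZMod m) (ε ε' : Fin (n - 1) → ℤˣ)
    (hdisj : iota m n q ε ∩ iota m n q' ε' = ∅) :
    (q' = q + 1 ∨ q' = q - 1) ∧ ∀ j : Fin (n - 1), ε j = ε' j := by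
  haveI : NeZero m := ⟨by omega⟩
  have h0n : 0 < n := hn
  have hm2 : 0 < m / 2 := by omega
  have hd : ∀ v, v ∈ iota m n q ε → v ∈ iota m n q' ε' → False := fun v h1 h2 =>
    Set.eq_empty_iff_forall_notMem.mp hdisj v ⟨h1, h2⟩
  set inv2 : ZMod m := (((m+1)/2 : ℕ) : ZMod m) with hinv2
  have htwo : (2 : ZMod m) * inv2 = 1 := by
    have h1 : ((2 * ((m+1)/2) : ℕ) : ZMod m) = ((m + 1 : ℕ) : ZMod m) := by
      congr 1
      obtain ⟨k, hk⟩ := hmo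
      omega
    push_cast at h1
    rw [ZMod.natCast_self] at h1
    simpa using h1
  -- Part 2: the signs agree
  have hε : ∀ j : Fin (n-1), ε j = ε' j := by
    intro k
    by_contra hnek
    have hval : ((ε' k : ℤ) : ZMod m) = -((ε k : ℤ) : ZMod m) := by
      rcases Int.units_eq_one_or (ε k) with h1 | h1 <;>
        rcases Int.units_eq_one_or (ε' k) with h2 | h2 <;>
        simp_all
    have hunit : ((ε k : ℤ) : ZMod m) * ((ε k : ℤ) : ZMod m) = 1 := by
      rcases Int.units_eq_one_or (ε k) with h1 | h1 <;> simp [h1]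
    have hk1 : k.1 + 1 < n := by have := k.isLt; omega
    set a : ZMod m := (q + q') * inv2 with ha
    set b : ZMod m := ((ε k : ℤ) : ZMod m) * (q - q') * inv2 with hb
    set v : Fin n → ZMod m :=
      Pi.single (⟨0, h0n⟩ : Fin n) a + Pi.single (⟨k.1+1, hk1⟩ : Fin n) b with hv
    have hsum : ∀ δ : Fin (n-1) → ℤˣ,
        ∑ i, co m n δ i * v i
          = co m n δ ⟨0, h0n⟩ * a + co m n δ ⟨k.1+1, hk1⟩ * b := by
      intro δ
      simp only [hv, Pi.add_apply, mul_add, Finset.sum_add_distrib, sum_co_single]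
    have hco0 : ∀ δ : Fin (n-1) → ℤˣ, co m n δ ⟨0, h0n⟩ = 1 := by
      intro δ; simp [co]
    have hco1 : ∀ δ : Fin (n-1) → ℤˣ, co m n δ ⟨k.1+1, hk1⟩ = ((δ k : ℤ) : ZMod m) := by
      intro δ; simp [co]
    apply hd v
    · rw [mem_iota]
      refine ⟨0, hm2, ?_⟩
      rw [hsum, hco0, hco1]
      push_cast
      calc (1 : ZMod m) * a + ((ε k : ℤ) : ZMod m) * b
          = q * (2 * inv2) +
            (((ε k : ℤ) : ZMod m) * ((ε k : ℤ) : ZMod m) - 1) * ((q - q') * inv2) := by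
            rw [ha, hb]; ring
        _ = q + 2 * 0 := by rw [htwo, hunit]; ring
    · rw [mem_iota]
      refine ⟨0, hm2, ?_⟩
      rw [hsum, hco0, hco1, hval]
      push_cast
      calc (1 : ZMod m) * a + -((ε k : ℤ) : ZMod m) * b
          = q' * (2 * inv2) -
            (((ε k : ℤ) : ZMod m) * ((ε k : ℤ) : ZMod m) - 1) * ((q - q') * inv2) := by
            rw [ha, hb]; ring
        _ = q' + 2 * 0 := by rw [htwo, hunit]; ring
  refine ⟨?_, hε⟩
  -- Part 1
  have hεe : ε = ε' := funext hε
  subst hεe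
  have hco0 : co m n ε ⟨0, h0n⟩ = 1 := by simp [co]
  have hne : ∀ j j' : ℕ, j < m/2 → j' < m/2 →
      q + 2*(j : ZMod m) ≠ q' + 2*(j' : ZMod m) := by
    intro j j' hj hj' heq
    apply hd (Pi.single (⟨0, h0n⟩ : Fin n) (q + 2*(j : ZMod m)))
    · exact (mem_iota m n q ε _).mpr
        ⟨j, hj, by rw [sum_co_single, hco0, one_mul]⟩
    · exact (mem_iota m n q' ε _).mpr
        ⟨j', hj', by rw [sum_co_single, hco0, one_mul, heq]⟩
  obtain ⟨w, hwlt, hwc⟩ : ∃ w : ℕ, w < m ∧ ((w : ℕ) : ZMod m) = q' - q :=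
    ⟨(q' - q).val, ZMod.val_lt _, by rw [ZMod.natCast_val, ZMod.cast_id]⟩
  obtain ⟨T, hTlt, hT⟩ : ∃ T : ℕ, T < m ∧ 2 * (T : ZMod m) = q' - q := by
    rcases Nat.even_or_odd w with hwe | hwo
    · refine ⟨w/2, by omega, ?_⟩
      have h2 : ((2 * (w/2) : ℕ) : ZMod m) = ((w : ℕ) : ZMod m) := by
        congr 1; obtain ⟨l, hl⟩ := hwe; omega
      push_cast at h2
      rw [h2, hwc]
    · refine ⟨(w+m)/2, by omega, ?_⟩
      have h2 : ((2 * ((w+m)/2) : ℕ) : ZMod m) = ((w + m : ℕ) : ZMod m) := by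
        congr 1
        obtain ⟨k, hk⟩ := hmo
        obtain ⟨l, hl⟩ := hwo
        omega
      push_cast at h2
      rw [ZMod.natCast_self] at h2
      rw [show ((2:ZMod m) * (((w+m)/2 : ℕ) : ZMod m)) = (w : ZMod m) + 0 from h2,
        add_zero, hwc]
  have hq' : q' = q + 2 * (T : ZMod m) := by rw [hT]; ring
  have hmod : ∀ j' : ℕ, j' < m/2 → m/2 ≤ (T + j') % m := by
    intro j' hj'
    by_contra hlt
    push_neg at hlt
    refine hne ((T + j') % m) j' hlt hj' ?_
    rw [hq', ZMod.natCast_mod]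
    push_cast
    ring
  have hT1 : m/2 ≤ T := by
    have h := hmod 0 hm2
    rwa [Nat.add_zero, Nat.mod_eq_of_lt hTlt] at h
  have hT2 : T ≤ m/2 + 1 := by
    by_contra hgt
    push_neg at hgt
    have h := hmod (m/2 - 1) (by omega)
    have hge : m ≤ T + (m/2 - 1) := by omega
    rw [Nat.mod_eq_sub_mod hge, Nat.mod_eq_of_lt (by omega)] at h
    omega
  rcases (by omega : T = m/2 ∨ T = m/2 + 1) with hTe | hTe
  · right
    have h2T : 2 * T = m - 1 := by obtain ⟨k, hk⟩ := hmo; omega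
    have hkey : (2 : ZMod m) * (T : ZMod m) = -1 := by
      have hc : ((2 * T : ℕ) : ZMod m) = ((m - 1 : ℕ) : ZMod m) := by rw [h2T]
      push_cast at hc
      refine hc.trans ?_
      rw [Nat.cast_sub (by omega : 1 ≤ m), ZMod.natCast_self]
      simp
    rw [hq', hkey]
    ring
  · left
    have h2T : 2 * T = m + 1 := by obtain ⟨k, hk⟩ := hmo; omega
    have hkey : (2 : ZMod m) * (T : ZMod m) = 1 := by
      have hc : ((2 * T : ℕ) : ZMod m) = ((m + 1 : ℕ) : ZMod m) := by rw [h2T]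
      push_cast at hc
      rw [ZMod.natCast_self] at hc
      simpa using hc
    rw [hq', hkey]
end

section
/- For m, n ∈ ℕ with m ≥ 3 odd, the map ι_n : ZMod m × {±1}^(n−1) → II*(Z_m^n), ι_n(q, ε_1, …, ε_{n−1}) := {v ∈ (ZMod m)^n : v_1 + Σ_{i=1}^{n−1} ε_i v_{i+1} ∈ {q, q+2, …, q+m−3} (mod m)}, is a bijection onto the set of maximum independent sets of the discrete torus Z_m^n. -/
/-!
Split `(ZMod m)^(n+1)` into the `m^n` lines `{Fin.cons x w | x : ZMod m}`, each a cycle of odd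
length `m = 2k + 1`. An independent set meets every line in at most `k` points, and a line with
exactly `k` points carries an arc `{a, a + 2, …, a + 2k - 2}`. So a maximum independent set has
`k m^n` points and is given by the start `a w` of the arc on each line; adjacent lines carry
disjoint arcs, which forces `a (w + eᵢ) = a w ± 1`. Because `m` is odd these increments cannot
change, so `a w = a 0 + ∑ i, dᵢ wᵢ` with `dᵢ = ±1`, and the set is
`iota m (n+1) (a 0) (-d)`.
-/

namespace Torus

open Finset

variable {m : ℕ}

lemma eq_zero_of_two_mul_eq_zero (hm : Odd m) {x : ZMod m} (h : 2 * x = 0) : x = 0 := by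
  obtain ⟨k, rfl⟩ := hm
  have hm0 : ((2 * k + 1 : ℕ) : ZMod (2 * k + 1)) = 0 := ZMod.natCast_self _
  push_cast at hm0
  linear_combination x * hm0 - (k : ZMod (2 * k + 1)) * h

lemma one_ne_neg_one (hm : Odd m) [Fact (1 < m)] : (1 : ZMod m) ≠ -1 := fun h =>
  one_ne_zero (eq_zero_of_two_mul_eq_zero hm (by linear_combination h))

lemma natCast_ne_zero_of_lt {j : ℕ} (h0 : 0 < j) (h : j < m) : (j : ZMod m) ≠ 0 := by
  rw [Ne, ZMod.natCast_eq_zero_iff]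
  exact fun hdvd => h0.ne' (Nat.eq_zero_of_dvd_of_lt hdvd h)

lemma exists_eq_two_mul_natCast (hm : Odd m) (x : ZMod m) : ∃ t < m, x = 2 * (t : ZMod m) := by
  have : NeZero m := ⟨hm.pos.ne'⟩
  obtain ⟨k, rfl⟩ := hm
  have hm0 : ((2 * k + 1 : ℕ) : ZMod (2 * k + 1)) = 0 := ZMod.natCast_self _
  push_cast at hm0
  refine ⟨(((k : ZMod (2 * k + 1)) + 1) * x).val, ZMod.val_lt _, ?_⟩
  rw [ZMod.natCast_zmod_val]
  linear_combination -x * hm0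

lemma units_intCast_injective (hm : Odd m) [Fact (1 < m)] :
    Function.Injective fun u : ℤˣ => ((u : ℤ) : ZMod m) := by
  intro u u' h
  rcases Int.units_eq_one_or u with rfl | rfl <;> rcases Int.units_eq_one_or u' with rfl | rfl
  all_goals first
    | rfl
    | exact absurd (by simpa using h) (one_ne_neg_one hm)
    | exact absurd (by simpa using h.symm) (one_ne_neg_one hm)

lemma exists_units_intCast_eq {x : ZMod m} (hx : x = 1 ∨ x = -1) :
    ∃ u : ℤˣ, ((u : ℤ) : ZMod m) = x := by
  rcases hx with rfl | rfl
  exacts [⟨1, by simp⟩, ⟨-1, by simp⟩]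

def arc (q : ZMod m) : Set (ZMod m) :=
  {x | ∃ j : ℕ, j < m / 2 ∧ x = q + 2 * (j : ZMod m)}

lemma mem_arc_sub {q c x : ZMod m} : x ∈ arc (q - c) ↔ x + c ∈ arc q := by
  refine exists_congr fun j => and_congr_right fun _ => ?_
  constructor <;> intro h <;> linear_combination h

lemma self_mem_arc [Fact (1 < m)] (q : ZMod m) : q ∈ arc q :=
  ⟨0, Nat.div_pos (Fact.out : 1 < m) two_pos, by simp⟩

lemma arc_ncard (q : ZMod m) : (arc q).ncard = m / 2 := by
  have harc : arc q = (fun j : ℕ => q + 2 * (j : ZMod m)) '' ↑(range (m / 2)) := by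
    ext x
    simp [arc, eq_comm]
  rw [harc, Set.InjOn.ncard_image, Set.ncard_coe_finset, card_range]
  intro j hj j' hj' h
  simp only [coe_range, Set.mem_Iio] at hj hj'
  have h2 : ((2 * j : ℕ) : ZMod m) = ((2 * j' : ℕ) : ZMod m) := by
    push_cast
    linear_combination h
  rw [ZMod.natCast_eq_natCast_iff', Nat.mod_eq_of_lt (by omega),
    Nat.mod_eq_of_lt (by omega)] at h2
  omega

lemma add_one_notMem_arc {q x : ZMod m} (hx : x ∈ arc q) : x + 1 ∉ arc q := by
  rintro ⟨j', hj', h'⟩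
  obtain ⟨j, hj, rfl⟩ := hx
  have h2 : ((2 * j + 1 : ℕ) : ZMod m) = ((2 * j' : ℕ) : ZMod m) := by
    push_cast
    linear_combination h'
  rw [ZMod.natCast_eq_natCast_iff', Nat.mod_eq_of_lt (by omega),
    Nat.mod_eq_of_lt (by omega)] at h2
  omega

lemma arc_injective (hm : Odd m) [Fact (1 < m)] : Function.Injective (arc (m := m)) := by
  intro a b h
  obtain ⟨j, hj, hab⟩ : a ∈ arc b := h ▸ self_mem_arc a
  obtain ⟨j', hj', hba⟩ : b ∈ arc a := h.symm ▸ self_mem_arc b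
  have hsum : ((j + j' : ℕ) : ZMod m) = 0 :=
    eq_zero_of_two_mul_eq_zero hm (by push_cast; linear_combination -hab - hba)
  have hj0 : j = 0 := by
    by_contra hne
    exact natCast_ne_zero_of_lt (by omega) (by omega) hsum
  rw [hab, hj0]
  simp

/-- In half-steps, `arc a` and `arc b` are arcs of length `m / 2` on a cycle of length `m`,
starting `t` apart where `b - a = 2 t`; they are disjoint only when `t` is `m / 2` or
`m / 2 + 1`. -/
lemma eq_add_one_or_sub_one_of_disjoint (hm : Odd m) [Fact (1 < m)] {a b : ZMod m}
    (h : Disjoint (arc a) (arc b)) : b = a + 1 ∨ b = a - 1 := by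
  obtain ⟨t, ht, hba⟩ := exists_eq_two_mul_natCast hm (b - a)
  obtain ⟨k, rfl⟩ := hm
  have hm0 : ((2 * k + 1 : ℕ) : ZMod (2 * k + 1)) = 0 := ZMod.natCast_self _
  push_cast at hm0
  rcases lt_or_ge t k with htk | htk
  · exact absurd (self_mem_arc b)
      (h.notMem_of_mem_left ⟨t, by omega, by linear_combination hba⟩)
  obtain rfl | rfl | htk2 : t = k ∨ t = k + 1 ∨ k + 2 ≤ t := by omega
  · right
    linear_combination hba + hm0
  · left
    push_cast at hba
    linear_combination hba + hm0
  · refine absurd (self_mem_arc a) (h.notMem_of_mem_right ⟨2 * k + 1 - t, by omega, ?_⟩)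
    push_cast [Nat.cast_sub ht.le]
    linear_combination -hba - 2 * hm0

lemma ncard_le_of_add_one_notMem [NeZero m] {t : Set (ZMod m)} (ht : ∀ x ∈ t, x + 1 ∉ t) :
    t.ncard ≤ m / 2 := by
  have hdisj : Disjoint t ((· + 1) '' t) := by
    rw [Set.disjoint_right]
    rintro _ ⟨x, hx, rfl⟩
    exact ht x hx
  have h2 : 2 * t.ncard ≤ m := calc
    2 * t.ncard = (t ∪ (· + 1) '' t).ncard := by
      rw [Set.ncard_union_eq hdisj, Set.ncard_image_of_injective _ (add_left_injective 1)]
      ring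
    _ ≤ Nat.card (ZMod m) := Set.ncard_le_card _
    _ = m := Nat.card_zmod m
  omega

/-- `t + 1 ⊆ tᶜ` and `tᶜ` has one point more than `t`. -/
lemma exists_gap (hm : Odd m) {t : Set (ZMod m)} (ht : ∀ x ∈ t, x + 1 ∉ t)
    (hcard : t.ncard = m / 2) : ∃ b ∉ t, ∀ y ∉ t, y ≠ b → y - 1 ∈ t := by
  have : NeZero m := ⟨hm.pos.ne'⟩
  have hshift : (· + 1) '' t ⊆ tᶜ := by
    rintro _ ⟨x, hx, rfl⟩
    exact ht x hx
  have hshift_card : ((· + 1) '' t).ncard = m / 2 := by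
    rw [Set.ncard_image_of_injective _ (add_left_injective 1), hcard]
  have hcompl_card : tᶜ.ncard = m / 2 + 1 := by
    have := Set.ncard_add_ncard_compl t
    rw [Nat.card_zmod] at this
    obtain ⟨k, rfl⟩ := hm
    omega
  obtain ⟨b, hb, hb_shift⟩ := Set.exists_mem_notMem_of_ncard_lt_ncard
    (s := (· + 1) '' t) (t := tᶜ) (by rw [hshift_card, hcompl_card]; omega)
  have hshift_eq : (· + 1) '' t = tᶜ \ {b} :=
    Set.eq_of_subset_of_ncard_le (fun y hy => ⟨hshift hy, fun hyb => hb_shift (hyb ▸ hy)⟩)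
      (by rw [Set.ncard_sdiff_singleton_of_mem hb, hcompl_card, hshift_card]; omega)
  refine ⟨b, hb, fun y hy hyb => ?_⟩
  obtain ⟨x, hx, rfl⟩ : y ∈ (· + 1) '' t := hshift_eq ▸ ⟨hy, hyb⟩
  simpa using hx

/-- Starting after the gap `b`, the set must contain `b + 1, b + 3, …`. -/
lemma eq_arc_of_ncard_eq (hm : Odd m) {t : Set (ZMod m)} (ht : ∀ x ∈ t, x + 1 ∉ t)
    (hcard : t.ncard = m / 2) : ∃ a, t = arc a := by
  obtain ⟨b, hb, hgap⟩ := exists_gap hm ht hcard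
  have hne : ∀ j < m / 2, b + 1 + 2 * (j : ZMod m) ≠ b := fun j hj h =>
    natCast_ne_zero_of_lt (m := m) (j := 2 * j + 1) (by omega) (by omega)
      (by push_cast; linear_combination h)
  have hmem : ∀ j < m / 2, b + 1 + 2 * (j : ZMod m) ∈ t := by
    intro j
    induction j with
    | zero =>
      intro hj
      by_contra hnot
      exact hb (by simpa using hgap _ hnot (hne 0 hj))
    | succ j ih =>
      intro hj
      by_contra hnot
      refine ht _ (ih (by omega)) ?_
      convert hgap _ hnot (hne _ hj) using 1
      push_cast
      ring
  have : NeZero m := ⟨hm.pos.ne'⟩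
  refine ⟨b + 1, (Set.eq_of_subset_of_ncard_le ?_ (by rw [hcard, arc_ncard])).symm⟩
  rintro _ ⟨j, hj, rfl⟩
  exact hmem j hj

/-- With `T` the number of `+1`s, the sum is `2 T - m`, so `m ∣ 2 T`; as `m` is odd,
`T ∈ {0, m}`. -/
lemma forall_eq_one_or_forall_eq_neg_one [NeZero m] (hm : Odd m) {f : ZMod m → ZMod m}
    (hf : ∀ c, f c = 1 ∨ f c = -1) (hsum : ∑ c, f c = 0) :
    (∀ c, f c = 1) ∨ (∀ c, f c = -1) := by
  classical
  have hf' : ∀ c, f c = 2 * (if f c = 1 then 1 else 0) - 1 := fun c => by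
    split_ifs with h
    · linear_combination h
    · rw [(hf c).resolve_left h]
      ring
  have hT : (#{c | f c = 1} : ZMod m) = 0 := by
    refine eq_zero_of_two_mul_eq_zero hm ?_
    have hm0 : ((Fintype.card (ZMod m) : ℕ) : ZMod m) = 0 := by simp
    rw [← hsum, sum_congr rfl fun c _ => hf' c, sum_sub_distrib, ← mul_sum, sum_boole]
    simp only [sum_const, card_univ, nsmul_eq_mul, mul_one]
    linear_combination hm0
  rw [ZMod.natCast_eq_zero_iff] at hT
  rcases Nat.eq_zero_or_pos #{c | f c = 1} with h0 | hpos
  · right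
    intro c
    have hc : c ∉ ({c | f c = 1} : Finset (ZMod m)) := by simp [card_eq_zero.mp h0]
    exact (hf c).resolve_left (by simpa using hc)
  · left
    have huniv : ({c | f c = 1} : Finset (ZMod m)) = univ := eq_univ_of_card _
      (le_antisymm (card_le_univ _) (by simpa using Nat.le_of_dvd hpos hT))
    intro c
    have hc : c ∈ ({c | f c = 1} : Finset (ZMod m)) := by
      rw [huniv]
      exact mem_univ c
    simpa using hc

lemma eq_zero_of_arith_prog_eq_one_or_neg_one (hm : Odd m) {x δ : ZMod m}
    (h0 : x = 1 ∨ x = -1) (h1 : x + δ = 1 ∨ x + δ = -1)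
    (h2 : x + 2 * δ = 1 ∨ x + 2 * δ = -1) : δ = 0 := by
  apply eq_zero_of_two_mul_eq_zero hm
  rcases h0 with h0 | h0 <;> rcases h1 with h1 | h1 <;> rcases h2 with h2 | h2 <;> grind

section Increments

variable {ι : Type*} [Fintype ι] [DecidableEq ι]

lemma eq_add_sum_of_add_single [NeZero m] {g : (ι → ZMod m) → ZMod m} {d : ι → ZMod m}
    (h : ∀ i w, g (w + Pi.single i 1) = g w + d i) (w : ι → ZMod m) :
    g w = g 0 + ∑ i, d i * w i := by
  have hline : ∀ i v (c : ZMod m), g (v + Pi.single i c) = g v + d i * c := by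
    intro i v c
    rw [← ZMod.natCast_zmod_val c]
    induction c.val with
    | zero => simp
    | succ t ih =>
      rw [Nat.cast_succ, Pi.single_add, ← add_assoc, h, ih]
      ring
  have hpartial : ∀ A : Finset ι,
      g (∑ i ∈ A, Pi.single i (w i)) = g 0 + ∑ i ∈ A, d i * w i := by
    intro A
    induction A using Finset.induction_on with
    | empty => simp
    | insert i A hi ih => rw [sum_insert hi, sum_insert hi, add_comm, hline, ih]; ring
  rw [← hpartial univ, univ_sum_single]

/-- Along one direction the steps are constant, since they are `±1` and sum to `0` around a
cycle of odd length; commuting two directions then shows they do not change across directions. -/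
lemma exists_eq_add_sum_of_add_single_sub (hm : Odd m) {a : (ι → ZMod m) → ZMod m}
    (ha : ∀ i w, a (w + Pi.single i 1) - a w = 1 ∨ a (w + Pi.single i 1) - a w = -1) :
    ∃ d : ι → ZMod m, (∀ i, d i = 1 ∨ d i = -1) ∧
      ∀ w, a w = a 0 + ∑ i, d i * w i := by
  have : NeZero m := ⟨hm.pos.ne'⟩
  set D : ι → (ι → ZMod m) → ZMod m := fun i w => a (w + Pi.single i 1) - a w with hD
  have along : ∀ i w, D i (w + Pi.single i 1) = D i w := by
    intro i w
    have hstep : ∀ c : ZMod m, D i (w + Pi.single i c) =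
        a (w + Pi.single i (c + 1)) - a (w + Pi.single i c) := fun c => by
      simp only [hD, Pi.single_add, add_assoc]
    have hsum : ∑ c, D i (w + Pi.single i c) = 0 := by
      simp only [hstep, sum_sub_distrib, sub_eq_zero]
      exact Fintype.sum_equiv (Equiv.addRight 1) _ _ fun _ => rfl
    rcases forall_eq_one_or_forall_eq_neg_one hm (fun c => ha i _) hsum with h | h <;>
      simpa using (h 1).trans (h 0).symm
  have hD1 : ∀ i w, D i w = 1 ∨ D i w = -1 := ha
  have square : ∀ i j w,
      D j (w + Pi.single i 1) = D j w + (D i (w + Pi.single j 1) - D i w) := by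
    intro i j w
    simp only [hD]
    rw [add_right_comm w (Pi.single j 1)]
    ring
  have across : ∀ i j w, D i (w + Pi.single j 1) = D i w := by
    intro i j w
    have htwo : D j (w + Pi.single i 1 + Pi.single i 1) =
        D j w + 2 * (D i (w + Pi.single j 1) - D i w) := by
      rw [square i j (w + Pi.single i 1), square i j w, add_right_comm w (Pi.single i 1), along,
        along]
      ring
    exact sub_eq_zero.mp <| eq_zero_of_arith_prog_eq_one_or_neg_one hm (hD1 j w)
      (square i j w ▸ hD1 j (w + Pi.single i 1))
      (htwo ▸ hD1 j (w + Pi.single i 1 + Pi.single i 1))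
  have hconst : ∀ i w, D i w = D i 0 := fun i w => by
    simpa using eq_add_sum_of_add_single (d := 0) (fun j v => by simp [across]) w
  refine ⟨fun i => D i 0, fun i => hD1 i 0, eq_add_sum_of_add_single fun i w => ?_⟩
  rw [← hconst i w, hD]
  ring

end Increments

lemma torus_adj {n : ℕ} {u v : Fin n → ZMod m} :
    (torus m n).Adj u v ↔ u ≠ v ∧
      ∃ j, (u j = v j + 1 ∨ u j = v j - 1) ∧ ∀ i, i ≠ j → u i = v i := by
  rw [torus, SimpleGraph.fromRel_adj]
  refine and_congr_right fun _ => ⟨?_, Or.inl⟩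
  rintro (h | ⟨j, hj, hrest⟩)
  · exact h
  · refine ⟨j, ?_, fun i hi => (hrest i hi).symm⟩
    rcases hj with h | h
    · right; rw [h]; ring
    · left; rw [h]; ring

lemma torus_adj_add_single [Nontrivial (ZMod m)] {n : ℕ} (v : Fin n → ZMod m) (j : Fin n) :
    (torus m n).Adj (v + Pi.single j 1) v := by
  refine torus_adj.mpr ⟨fun h => ?_, j, Or.inl (by simp), fun i hi => by simp [hi]⟩
  simp at h

lemma sum_mul_eq_add_one_or_sub_one_of_adj {n : ℕ} {c u v : Fin n → ZMod m}
    (hc : ∀ i, c i = 1 ∨ c i = -1) (h : (torus m n).Adj u v) :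
    ∑ i, c i * u i = ∑ i, c i * v i + 1 ∨ ∑ i, c i * u i = ∑ i, c i * v i - 1 := by
  obtain ⟨-, j, hj, hrest⟩ := torus_adj.mp h
  have hdiff : ∑ i, c i * u i - ∑ i, c i * v i = c j * (u j - v j) := by
    rw [← sum_sub_distrib, sum_eq_single j (fun i _ hi => by rw [hrest i hi]; ring) (by simp)]
    ring
  rcases hc j with hcj | hcj <;> rcases hj with huj | huj <;> rw [hcj, huj] at hdiff
  · left; linear_combination hdiff
  · right; linear_combination hdiff
  · right; linear_combination hdiff
  · left; linear_combination hdiff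

def line {α : Type*} {n : ℕ} (s : Set (Fin (n + 1) → α)) (w : Fin n → α) : Set α :=
  {x | Fin.cons x w ∈ s}

lemma ext_line {α : Type*} {n : ℕ} {s s' : Set (Fin (n + 1) → α)}
    (h : ∀ w, line s w = line s' w) : s = s' := by
  ext v
  rw [← Fin.cons_self_tail v]
  exact Set.ext_iff.mp (h (Fin.tail v)) (v 0)

lemma ncard_eq_sum_ncard_line {α : Type*} [Fintype α] {n : ℕ} (s : Set (Fin (n + 1) → α)) :
    s.ncard = ∑ w, (line s w).ncard := by
  let e : s ≃ Σ w : Fin n → α, line s w :=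
    { toFun := fun v => ⟨Fin.tail v.1, v.1 0, by simp [line]⟩
      invFun := fun p => ⟨Fin.cons p.2.1 p.1, p.2.2⟩
      left_inv := fun v => Subtype.ext (Fin.cons_self_tail v.1)
      right_inv := fun _ => rfl }
  rw [← Nat.card_coe_set_eq, Nat.card_congr e, Nat.card_sigma]
  simp only [Nat.card_coe_set_eq]

lemma cons_add_single_zero {n : ℕ} (x : ZMod m) (w : Fin n → ZMod m) :
    (Fin.cons x w : Fin (n + 1) → ZMod m) + Pi.single 0 1 = Fin.cons (x + 1) w := by
  ext i
  cases i using Fin.cases <;> simp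

lemma cons_add_single_succ {n : ℕ} (x : ZMod m) (w : Fin n → ZMod m) (j : Fin n) :
    (Fin.cons x w : Fin (n + 1) → ZMod m) + Pi.single j.succ 1 =
      Fin.cons x (w + Pi.single j 1) := by
  ext i
  cases i using Fin.cases <;> simp [Pi.single_apply]

lemma add_one_notMem_line_of_isIndep [Nontrivial (ZMod m)] {n : ℕ}
    {s : Set (Fin (n + 1) → ZMod m)} (hs : IsIndep (torus m (n + 1)) s) (w : Fin n → ZMod m) :
    ∀ x ∈ line s w, x + 1 ∉ line s w := fun x hx hx1 => by
  have hadj := torus_adj_add_single (Fin.cons x w) 0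
  rw [cons_add_single_zero] at hadj
  exact hs hx1 hx hadj.ne hadj

lemma ncard_le_of_isIndep [NeZero m] [Nontrivial (ZMod m)] {n : ℕ}
    {s : Set (Fin (n + 1) → ZMod m)} (hs : IsIndep (torus m (n + 1)) s) :
    s.ncard ≤ m / 2 * m ^ n := by
  rw [ncard_eq_sum_ncard_line]
  calc ∑ w, (line s w).ncard ≤ ∑ _w : Fin n → ZMod m, m / 2 :=
        sum_le_sum fun w _ => ncard_le_of_add_one_notMem (add_one_notMem_line_of_isIndep hs w)
    _ = m / 2 * m ^ n := by simp [mul_comm]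

def iotaCoeff {n : ℕ} (ε : Fin (n - 1) → ℤˣ) (i : Fin n) : ZMod m :=
  if _h : i.1 = 0 then 1
  else (((ε ⟨i.1 - 1, by have := i.isLt; omega⟩ : ℤˣ) : ℤ) : ZMod m)

lemma mem_iota {n : ℕ} {q : ZMod m} {ε : Fin (n - 1) → ℤˣ} {v : Fin n → ZMod m} :
    v ∈ iota m n q ε ↔ ∑ i, iotaCoeff ε i * v i ∈ arc q :=
  Iff.rfl

lemma iotaCoeff_eq_one_or_neg_one {n : ℕ} (ε : Fin (n - 1) → ℤˣ) (i : Fin n) :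
    iotaCoeff (m := m) ε i = 1 ∨ iotaCoeff (m := m) ε i = -1 := by
  unfold iotaCoeff
  split_ifs
  · exact Or.inl rfl
  · rcases Int.units_eq_one_or (ε ⟨i.1 - 1, by omega⟩) with h | h <;> simp [h]

lemma iota_isIndep {n : ℕ} (q : ZMod m) (ε : Fin (n - 1) → ℤˣ) :
    IsIndep (torus m n) (iota m n q ε) := by
  intro u hu v hv _ hadj
  rw [mem_iota] at hu hv
  rcases sum_mul_eq_add_one_or_sub_one_of_adj (iotaCoeff_eq_one_or_neg_one ε) hadj with h | h
  · exact add_one_notMem_arc hv (h ▸ hu)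
  · exact add_one_notMem_arc hu (by rw [h, sub_add_cancel]; exact hv)

lemma line_iota {n : ℕ} (q : ZMod m) (ε : Fin n → ℤˣ) (w : Fin n → ZMod m) :
    line (iota m (n + 1) q ε) w = arc (q - ∑ i, ((ε i : ℤ) : ZMod m) * w i) := by
  ext x
  rw [mem_arc_sub]
  simp [line, mem_iota, Fin.sum_univ_succ, iotaCoeff]

lemma iota_ncard [NeZero m] {n : ℕ} (q : ZMod m) (ε : Fin n → ℤˣ) :
    (iota m (n + 1) q ε).ncard = m / 2 * m ^ n := by
  simp [ncard_eq_sum_ncard_line, line_iota, arc_ncard, mul_comm]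

lemma maxIndep_torus_iff [Fact (1 < m)] {n : ℕ} {s : Set (Fin (n + 1) → ZMod m)} :
    MaxIndep (torus m (n + 1)) s ↔ IsIndep (torus m (n + 1)) s ∧ s.ncard = m / 2 * m ^ n := by
  refine ⟨fun ⟨hs, hmax⟩ => ⟨hs, (ncard_le_of_isIndep hs).antisymm ?_⟩,
    fun ⟨hs, hcard⟩ => ⟨hs, fun t ht => hcard ▸ ncard_le_of_isIndep ht⟩⟩
  simpa [iota_ncard] using hmax _ (iota_isIndep 0 (fun _ : Fin n => 1))

lemma eq_and_eq_of_iota_eq (hm : Odd m) [Fact (1 < m)] {n : ℕ} {q q' : ZMod m}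
    {ε ε' : Fin n → ℤˣ}
    (h : iota m (n + 1) q ε = iota m (n + 1) q' ε') : q = q' ∧ ε = ε' := by
  have hlin : ∀ w : Fin n → ZMod m, q - ∑ i, ((ε i : ℤ) : ZMod m) * w i =
      q' - ∑ i, ((ε' i : ℤ) : ZMod m) * w i :=
    fun w => arc_injective hm (by rw [← line_iota, ← line_iota, h])
  have hq : q = q' := by simpa using hlin 0
  refine ⟨hq, funext fun i => units_intCast_injective hm ?_⟩
  simpa [hq, Pi.single_apply] using hlin (Pi.single i 1)

lemma exists_iota_eq (hm : Odd m) [Fact (1 < m)] {n : ℕ} {s : Set (Fin (n + 1) → ZMod m)}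
    (hs : IsIndep (torus m (n + 1)) s) (hcard : s.ncard = m / 2 * m ^ n) :
    ∃ (q : ZMod m) (ε : Fin n → ℤˣ), iota m (n + 1) q ε = s := by
  have hline_card : ∀ w, (line s w).ncard = m / 2 := by
    have hle : ∀ w ∈ univ, (line s w).ncard ≤ m / 2 := fun w _ =>
      ncard_le_of_add_one_notMem (add_one_notMem_line_of_isIndep hs w)
    refine fun w => (sum_eq_sum_iff_of_le hle).mp ?_ w (mem_univ w)
    simpa [← ncard_eq_sum_ncard_line, mul_comm] using hcard
  choose a ha using fun w =>
    eq_arc_of_ncard_eq hm (add_one_notMem_line_of_isIndep hs w) (hline_card w)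
  have hstep : ∀ i w, a (w + Pi.single i 1) - a w = 1 ∨ a (w + Pi.single i 1) - a w = -1 := by
    intro i w
    have hdisj : Disjoint (arc (a w)) (arc (a (w + Pi.single i 1))) := by
      rw [← ha, ← ha, Set.disjoint_left]
      intro x hx hx'
      have hadj := torus_adj_add_single (Fin.cons x w) i.succ
      rw [cons_add_single_succ] at hadj
      exact hs hx' hx hadj.ne hadj
    rcases eq_add_one_or_sub_one_of_disjoint hm hdisj with h | h
    · left; rw [h]; ring
    · right; rw [h]; ring
  obtain ⟨d, hd, haff⟩ := exists_eq_add_sum_of_add_single_sub hm hstep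
  choose ε hε using fun i =>
    exists_units_intCast_eq (x := -d i) (by rcases hd i with h | h <;> simp [h])
  refine ⟨a 0, ε, ext_line fun w => ?_⟩
  rw [line_iota, ha, haff w]
  simp [hε]

end Torus

open Torus

/-- For `m ≥ 3` odd, `ι_n` is a bijection from `ZMod m × {±1}^(n-1)` onto the set of
maximum independent sets of `Z_m^n`. -/
theorem stmt_6 (m n : ℕ) (hm : 3 ≤ m) (hmo : Odd m) (hn : 1 ≤ n) :
    Set.BijOn (fun x : ZMod m × (Fin (n - 1) → ℤˣ) => iota m n x.1 x.2)
      Set.univ {s : Set (Fin n → ZMod m) | MaxIndep (torus m n) s} := by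
  have : Fact (1 < m) := ⟨by omega⟩
  obtain ⟨n, rfl⟩ : ∃ k, n = k + 1 := ⟨n - 1, by omega⟩
  refine ⟨fun x _ => ?_, fun x _ y _ h => ?_, fun s hs => ?_⟩
  · exact maxIndep_torus_iff.mpr ⟨iota_isIndep x.1 x.2, iota_ncard x.1 x.2⟩
  · obtain ⟨hq, hε⟩ := eq_and_eq_of_iota_eq hmo h
    exact Prod.ext hq hε
  · obtain ⟨hs, hcard⟩ := maxIndep_torus_iff.mp hs
    obtain ⟨q, ε, rfl⟩ := exists_iota_eq hmo hs hcard
    exact ⟨(q, ε), Set.mem_univ _, rfl⟩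
end

section
/- For m, n ∈ ℕ with m ≥ 3 odd, the discrete torus Z_m^n has exactly m · 2^(n−1) maximum independent sets, and each of them has cardinality ⌊m/2⌋ · m^(n−1). -/
/-!
A maximum independent set of the odd torus is a *stripe* `{v | a ⬝ᵥ v ∈ arc c}`, where `arc c`
is a maximum independent set of the `m`-cycle and `a ∈ {±1}ⁿ` is normalised by `a 0 = 1`.
The fibres of an independent set along one coordinate are independent in the cycle, which gives
the bound `⌊m/2⌋ · m^(n-1)`; stripes attain it. Conversely, by induction on `n`, every slice
`x_n = t` of a maximum independent set is maximum, hence a stripe. Consecutive slices are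
disjoint, which forces a common coefficient vector and offsets differing by `±1`; since the `m`
steps around the cycle add up to `0` and `m` is odd, they all have the same sign, so the whole
set is a stripe. Normalised stripes are determined by their `2^(n-1) · m` parameters.
-/

open Function Matrix

lemma ZMod.natCast_inj_of_lt {m a b : ℕ} (ha : a < m) (hb : b < m) (h : (a : ZMod m) = b) :
    a = b := by
  rwa [ZMod.natCast_eq_natCast_iff', Nat.mod_eq_of_lt ha, Nat.mod_eq_of_lt hb] at h

section Arc

variable {m : ℕ}

/-- `arc c = {c, c + 2, …, c + m - 3}`; for odd `m` these are the maximum independent sets of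
the `m`-cycle. -/
def arc (c : ZMod m) : Set (ZMod m) :=
  (fun k : ℕ => c + 2 * (k : ZMod m)) '' Set.Iio (m / 2)

lemma mem_arc {c x : ZMod m} : x ∈ arc c ↔ ∃ k < m / 2, c + 2 * (k : ZMod m) = x := by
  simp [arc]

lemma mem_arc_self (hm : 1 < m) (c : ZMod m) : c ∈ arc c :=
  mem_arc.2 ⟨0, by omega, by simp⟩

lemma mem_arc_add {c e x : ZMod m} : x ∈ arc (c + e) ↔ x - e ∈ arc c := by
  simp only [mem_arc, eq_sub_iff_add_eq, add_right_comm c e]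

lemma add_one_notMem_arc {c x : ZMod m} (hx : x ∈ arc c) : x + 1 ∉ arc c := by
  obtain ⟨k, hk, rfl⟩ := mem_arc.1 hx
  rintro ⟨l, hl, hkl⟩
  have : ((2 * l : ℕ) : ZMod m) = (2 * k + 1 : ℕ) := by
    push_cast; linear_combination hkl
  have := ZMod.natCast_inj_of_lt (by simp at hl; omega) (by omega) this
  omega

lemma sub_one_notMem_arc (c : ZMod m) : c - 1 ∉ arc c := by
  rintro ⟨k, hk, hkc⟩
  have : ((2 * k + 1 : ℕ) : ZMod m) = 0 := by
    push_cast; linear_combination hkc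
  have := Nat.le_of_dvd (by omega) ((ZMod.natCast_eq_zero_iff _ _).1 this)
  simp at hk
  omega

lemma ncard_arc (c : ZMod m) : (arc c).ncard = m / 2 := by
  rw [arc, Set.InjOn.ncard_image, Set.ncard_eq_toFinset_card', Set.toFinset_Iio,
    Nat.card_Iio]
  intro k hk l hl hkl
  have := ZMod.natCast_inj_of_lt (m := m) (a := 2 * k) (b := 2 * l)
    (by simp at hk; omega) (by simp at hl; omega) (by push_cast; linear_combination hkl)
  omega

lemma arc_injective (hmo : Odd m) : Injective (arc (m := m)) := by
  intro c c' h
  have hm : 2 ≤ m ∨ m = 1 := by obtain ⟨r, rfl⟩ := hmo; omega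
  obtain hm | rfl := hm
  · obtain ⟨k, hk, rfl⟩ := mem_arc.1 (h ▸ mem_arc_self hm c)
    obtain ⟨l, hl, hkl⟩ := mem_arc.1 (h.symm ▸ mem_arc_self hm c')
    have h0 : ((2 * (k + l) : ℕ) : ZMod m) = 0 := by push_cast; linear_combination hkl
    have hdvd := (Nat.Coprime.dvd_mul_left (Nat.coprime_two_right.2 hmo)).1
      ((ZMod.natCast_eq_zero_iff _ _).1 h0)
    obtain rfl : k = 0 := by have := Nat.eq_zero_of_dvd_of_lt hdvd (by omega); omega
    simp
  · exact Subsingleton.elim _ _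

lemma ncard_union_image_add_one [NeZero m] {T : Set (ZMod m)} (hT : ∀ x ∈ T, x + 1 ∉ T) :
    (T ∪ (· + 1) '' T).ncard = 2 * T.ncard := by
  rw [Set.ncard_union_eq, Set.ncard_image_of_injective _ (add_left_injective 1), two_mul]
  rw [Set.disjoint_right]
  rintro _ ⟨x, hx, rfl⟩
  exact hT x hx

lemma ncard_le_of_add_one_notMem [NeZero m] {T : Set (ZMod m)} (hT : ∀ x ∈ T, x + 1 ∉ T) :
    T.ncard ≤ m / 2 := by
  have := (ncard_union_image_add_one hT).symm.trans_le (Set.ncard_le_card _)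
  rw [Nat.card_zmod] at this
  omega

lemma eq_arc_of_add_one_notMem (hmo : Odd m) {T : Set (ZMod m)} (hT : ∀ x ∈ T, x + 1 ∉ T)
    (hcard : T.ncard = m / 2) : ∃ c, T = arc c := by
  have : NeZero m := ⟨by rintro rfl; simp at hmo⟩
  -- `T` and `T + 1` are disjoint and miss a single point `d`; then `x ∉ T` forces `x + 1 ∈ T`
  -- for `x ≠ d - 1`, so `T` contains `d + 1, d + 3, …` and has no room for anything else.
  obtain ⟨d, hd⟩ : ∃ d, (T ∪ (· + 1) '' T)ᶜ = {d} := by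
    rw [← Set.ncard_eq_one, Set.ncard_compl, ncard_union_image_add_one hT, Nat.card_zmod, hcard]
    obtain ⟨r, rfl⟩ := hmo
    omega
  have hcover : ∀ x, x ≠ d → x ∈ T ∨ x - 1 ∈ T := by
    intro x hx
    by_contra! h
    have : x ∈ (T ∪ (· + 1) '' T)ᶜ := by
      rintro (hxT | ⟨y, hy, rfl⟩)
      · exact h.1 hxT
      · exact h.2 (by simpa using hy)
    exact hx (by rwa [hd, Set.mem_singleton_iff] at this)
  have hdT : d ∉ T := fun h => (Set.eq_singleton_iff_unique_mem.1 hd).1 (Or.inl h)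
  refine ⟨d + 1, (Set.eq_of_subset_of_ncard_le ?_ (by rw [hcard, ncard_arc])).symm⟩
  suffices ∀ k < m / 2, d + 1 + 2 * (k : ZMod m) ∈ T by
    rintro _ ⟨k, hk, rfl⟩
    exact this k hk
  intro k hk
  induction k with
  | zero =>
    have : Fact (1 < m) := ⟨by omega⟩
    simpa using (hcover (d + 1) (by simp)).resolve_right (by simpa using hdT)
  | succ k ih =>
    have hne : d + 1 + 2 * ((k + 1 : ℕ) : ZMod m) ≠ d := by
      intro h
      have : ((2 * k + 3 : ℕ) : ZMod m) = 0 := by push_cast at h ⊢; linear_combination h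
      have := Nat.le_of_dvd (by omega) ((ZMod.natCast_eq_zero_iff _ _).1 this)
      omega
    refine (hcover _ hne).resolve_right fun h => hT _ (ih (by omega)) ?_
    convert h using 1
    push_cast
    ring

lemma eq_add_one_or_eq_sub_one_of_disjoint_arc (hmo : Odd m) {c c' : ZMod m}
    (h : Disjoint (arc c) (arc c')) : c' = c + 1 ∨ c' = c - 1 := by
  obtain ⟨r, rfl⟩ := hmo
  obtain _ | r := r
  · exact Or.inl (Subsingleton.elim (α := ZMod 1) _ _)
  have h0 : ((2 * (r + 1) + 1 : ℕ) : ZMod (2 * (r + 1) + 1)) = 0 := ZMod.natCast_self _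
  push_cast at h0
  have hj : (c' - c).val < 2 * (r + 1) + 1 := ZMod.val_lt _
  have hc' : c' = c + ((c' - c).val : ZMod _) := by simp
  obtain ⟨k, hk | hk⟩ := Nat.even_or_odd' (c' - c).val
  · rw [hk] at hc' hj
    by_cases hkr : k < r + 1
    · refine (Set.disjoint_left.1 h (mem_arc.2 ⟨k, by omega, ?_⟩)
        (mem_arc_self (by omega) c')).elim
      rw [hc']
      push_cast
      ring
    · right
      rw [hc', show k = r + 1 by omega]
      push_cast
      linear_combination h0
  · rw [hk] at hc' hj
    obtain _ | k := k
    · left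
      simpa using hc'
    · refine (Set.disjoint_left.1 h (mem_arc.2 ⟨k, by omega, rfl⟩)
        (mem_arc.2 ⟨r, by omega, ?_⟩)).elim
      rw [hc']
      push_cast
      linear_combination h0

end Arc

namespace ZMod

variable {m : ℕ}

lemma apply_eq_apply_zero_of_add_one [NeZero m] {α : Sort*} {f : ZMod m → α}
    (h : ∀ t, f (t + 1) = f t) (t : ZMod m) : f t = f 0 := by
  obtain ⟨k, rfl⟩ := natCast_zmod_surjective t
  induction k with
  | zero => simp
  | succ k ih => rw [Nat.cast_succ, h, ih]

/-- The `m` steps sum to `2 · #{up-steps} - m`, which vanishes modulo the odd number `m` only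
if all steps agree. -/
lemma exists_eq_add_mul_of_odd (hmo : Odd m) {g : ZMod m → ZMod m}
    (h : ∀ t, g (t + 1) - g t = 1 ∨ g (t + 1) - g t = -1) :
    ∃ ε : ZMod m, (ε = 1 ∨ ε = -1) ∧ ∀ t, g t = g 0 + ε * t := by
  classical
  have : NeZero m := ⟨by rintro rfl; simp at hmo⟩
  set P := Finset.univ.filter fun t => g (t + 1) - g t = 1
  have hstep : ∀ t, g (t + 1) - g t = 2 * (if g (t + 1) - g t = 1 then 1 else 0) - 1 := by
    intro t
    split_ifs with ht
    · rw [ht]; ring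
    · rw [(h t).resolve_left ht]; ring
  have hP : ((2 * P.card : ℕ) : ZMod m) = 0 := by
    have hsum : ∑ t, (g (t + 1) - g t) = 0 := by
      rw [Finset.sum_sub_distrib, sub_eq_zero]
      exact Fintype.sum_equiv (Equiv.addRight 1) _ _ fun _ => rfl
    rw [Finset.sum_congr rfl fun t _ => hstep t, Finset.sum_sub_distrib, ← Finset.mul_sum,
      Finset.sum_boole] at hsum
    simpa [ZMod.card] using hsum
  have hdvd := (Nat.Coprime.dvd_mul_left (Nat.coprime_two_right.2 hmo)).1
    ((ZMod.natCast_eq_zero_iff _ _).1 hP)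
  have hle : P.card ≤ m := (Finset.card_filter_le _ _).trans_eq (ZMod.card m)
  obtain ⟨ε, hε, hεstep⟩ : ∃ ε : ZMod m, (ε = 1 ∨ ε = -1) ∧ ∀ t, g (t + 1) - g t = ε := by
    rcases Nat.eq_zero_or_pos P.card with h0 | hpos
    · refine ⟨-1, Or.inr rfl, fun t => (h t).resolve_left ?_⟩
      exact Finset.card_filter_eq_zero_iff.1 h0 t (Finset.mem_univ t)
    · refine ⟨1, Or.inl rfl, fun t => ?_⟩
      have hPm : P.card = m := le_antisymm hle (Nat.le_of_dvd hpos hdvd)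
      exact Finset.filter_card_eq (hPm.trans (ZMod.card m).symm) t (Finset.mem_univ t)
  refine ⟨ε, hε, fun t => ?_⟩
  have := apply_eq_apply_zero_of_add_one (f := fun t => g t - ε * t)
    (fun t => by linear_combination hεstep t) t
  simp only [mul_zero, sub_zero] at this
  linear_combination this

end ZMod

section Slicing

variable {α β : Type*} [Fintype α] [Fintype β]

lemma Set.ncard_eq_sum_ite (s : Set α) [DecidablePred (· ∈ s)] :
    s.ncard = ∑ a, if a ∈ s then 1 else 0 := by
  rw [← Finset.card_filter, Set.ncard_eq_toFinset_card']
  congr 1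
  ext
  simp

lemma Set.ncard_eq_sum_ncard_fst (s : Set (α × β)) :
    s.ncard = ∑ a, {b | (a, b) ∈ s}.ncard := by
  classical
  rw [Set.ncard_eq_sum_ite, Fintype.sum_prod_type]
  simp only [Set.ncard_eq_toFinset_card', Set.toFinset_ofPred, Finset.card_filter]

lemma Set.ncard_eq_sum_ncard_snd (s : Set (α × β)) :
    s.ncard = ∑ b, {a | (a, b) ∈ s}.ncard := by
  classical
  rw [Set.ncard_eq_sum_ite, Fintype.sum_prod_type_right]
  simp only [Set.ncard_eq_toFinset_card', Set.toFinset_ofPred, Finset.card_filter]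

variable {N : ℕ}

lemma ncard_eq_sum_ncard_snoc (s : Set (Fin (N + 1) → α)) :
    s.ncard = ∑ x, {w : Fin N → α | Fin.snoc w x ∈ s}.ncard := by
  rw [← Set.ncard_preimage_of_injective_subset_range (Fin.snocEquiv _).injective (by simp),
    Set.ncard_eq_sum_ncard_fst]
  rfl

lemma ncard_eq_sum_ncard_cons (s : Set (Fin (N + 1) → α)) :
    s.ncard = ∑ w : Fin N → α, {x | Fin.cons x w ∈ s}.ncard := by
  rw [← Set.ncard_preimage_of_injective_subset_range (Fin.consEquiv _).injective (by simp),
    Set.ncard_eq_sum_ncard_snd]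
  rfl

end Slicing

section Tuples

variable {M : Type*} [AddMonoid M] {N : ℕ}

lemma Fin.cons_add_single_zero (x y : M) (w : Fin N → M) :
    (Fin.cons x w : Fin (N + 1) → M) + Pi.single 0 y = Fin.cons (x + y) w := by
  ext i
  refine Fin.cases ?_ (fun i => ?_) i <;> simp

lemma Fin.snoc_add_single_last (x y : M) (w : Fin N → M) :
    (Fin.snoc w x : Fin (N + 1) → M) + Pi.single (Fin.last N) y = Fin.snoc w (x + y) := by
  ext i
  refine Fin.lastCases ?_ (fun i => ?_) i <;> simp [Fin.castSucc_ne_last]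

lemma Fin.snoc_add_single_castSucc (x y : M) (w : Fin N → M) (j : Fin N) :
    (Fin.snoc w x : Fin (N + 1) → M) + Pi.single j.castSucc y =
      Fin.snoc (w + Pi.single j y) x := by
  ext i
  refine Fin.lastCases ?_ (fun i => ?_) i <;> simp [Pi.single_apply, Fin.castSucc_ne_last]

end Tuples

lemma Fin.snoc_dotProduct_snoc {R : Type*} [CommSemiring R] {N : ℕ} (a w : Fin N → R)
    (x y : R) :
    (Fin.snoc a x : Fin (N + 1) → R) ⬝ᵥ Fin.snoc w y = a ⬝ᵥ w + x * y := by
  simp [dotProduct, Fin.sum_univ_castSucc]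

lemma exists_dotProduct_eq_and_dotProduct_eq {R ι : Type*} [CommRing R] [Nontrivial R]
    [Fintype ι] [DecidableEq ι] {a a' : ι → R} {i j : ι} (hi : a i = 1) (hi' : a' i = 1)
    (hj : IsUnit (a j - a' j)) (y y' : R) : ∃ v, a ⬝ᵥ v = y ∧ a' ⬝ᵥ v = y' := by
  have hij : j ≠ i := by rintro rfl; simp [hi, hi'] at hj
  obtain ⟨u, hu⟩ := hj
  set t := ↑u⁻¹ * (y - y')
  have ht : (a j - a' j) * t = y - y' := by rw [← hu, ← mul_assoc, Units.mul_inv, one_mul]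
  refine ⟨Pi.single i (y - a j * t) + Pi.single j t, ?_, ?_⟩
  · simp [dotProduct_add, hi]
  · simp only [dotProduct_add, dotProduct_single, hi']
    linear_combination -ht

lemma dotProduct_surjective {R ι : Type*} [CommSemiring R] [Fintype ι] [DecidableEq ι]
    {a : ι → R} {i : ι} (hi : a i = 1) : Surjective (a ⬝ᵥ · : (ι → R) → R) :=
  fun y => ⟨Pi.single i y, by simp [hi]⟩

section Torus

variable {m n N : ℕ} [Fact (1 < m)]

lemma isIndep_torus_iff {s : Set (Fin n → ZMod m)} :
    IsIndep (torus m n) s ↔ ∀ v ∈ s, ∀ j, v + Pi.single j 1 ∉ s := by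
  have hsingle : ∀ {u v : Fin n → ZMod m} {j}, u j = v j + 1 → (∀ i, i ≠ j → u i = v i) →
      u = v + Pi.single j 1 := by
    intro u v j hj hi
    ext i
    by_cases h : i = j
    · subst h; simp [hj]
    · simp [h, hi i h]
  constructor
  · intro hs v hv j hvj
    refine hs hvj hv (by simp) ?_
    rw [torus, SimpleGraph.fromRel_adj]
    exact ⟨by simp, Or.inl ⟨j, Or.inl (by simp), fun i hi => by simp [hi]⟩⟩
  · rintro hs u hu v hv - hadj
    rw [torus, SimpleGraph.fromRel_adj] at hadj
    have hsub : ∀ {u v : Fin n → ZMod m} {j}, u j = v j - 1 → (∀ i, i ≠ j → u i = v i) →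
        v = u + Pi.single j 1 := fun hj hi =>
      hsingle (by rw [hj]; ring) fun i h => (hi i h).symm
    obtain ⟨-, ⟨j, hj | hj, hi⟩ | ⟨j, hj | hj, hi⟩⟩ := hadj
    · exact hs v hv j (hsingle hj hi ▸ hu)
    · exact hs u hu j (hsub hj hi ▸ hv)
    · exact hs u hu j (hsingle hj hi ▸ hv)
    · exact hs v hv j (hsub hj hi ▸ hu)

lemma add_one_notMem_cons_fiber {s : Set (Fin (N + 1) → ZMod m)}
    (hs : IsIndep (torus m (N + 1)) s) (w : Fin N → ZMod m) :
    ∀ x ∈ {x | Fin.cons x w ∈ s}, x + 1 ∉ {x | Fin.cons x w ∈ s} := by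
  intro x hx hx1
  exact isIndep_torus_iff.1 hs _ hx 0 (by rwa [Fin.cons_add_single_zero])

lemma ncard_le_of_isIndep {s : Set (Fin (N + 1) → ZMod m)}
    (hs : IsIndep (torus m (N + 1)) s) : s.ncard ≤ m / 2 * m ^ N := by
  rw [ncard_eq_sum_ncard_cons]
  calc ∑ w, {x | Fin.cons x w ∈ s}.ncard ≤ ∑ _w : Fin N → ZMod m, m / 2 :=
        Finset.sum_le_sum fun w _ =>
          ncard_le_of_add_one_notMem (add_one_notMem_cons_fiber hs w)
    _ = m / 2 * m ^ N := by simp [ZMod.card, mul_comm]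

lemma isIndep_snoc_slice {s : Set (Fin (N + 1) → ZMod m)} (hs : IsIndep (torus m (N + 1)) s)
    (x : ZMod m) : IsIndep (torus m N) {w | Fin.snoc w x ∈ s} :=
  isIndep_torus_iff.2 fun _ hw j hwj =>
    isIndep_torus_iff.1 hs _ hw j.castSucc (by rwa [Fin.snoc_add_single_castSucc])

lemma snoc_add_one_notMem {s : Set (Fin (N + 1) → ZMod m)} (hs : IsIndep (torus m (N + 1)) s)
    {w : Fin N → ZMod m} {x : ZMod m} (h : Fin.snoc w x ∈ s) : Fin.snoc w (x + 1) ∉ s := by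
  rw [← Fin.snoc_add_single_last]
  exact isIndep_torus_iff.1 hs _ h _

lemma ncard_snoc_slice_of_ncard_eq {s : Set (Fin (N + 2) → ZMod m)}
    (hs : IsIndep (torus m (N + 2)) s) (hcard : s.ncard = m / 2 * m ^ (N + 1)) (x : ZMod m) :
    {w | Fin.snoc w x ∈ s}.ncard = m / 2 * m ^ N := by
  have hle : ∀ x, {w | Fin.snoc w x ∈ s}.ncard ≤ m / 2 * m ^ N := fun x =>
    ncard_le_of_isIndep (isIndep_snoc_slice hs x)
  have hsum : ∑ x, {w | Fin.snoc w x ∈ s}.ncard = ∑ _x : ZMod m, m / 2 * m ^ N := by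
    rw [← ncard_eq_sum_ncard_snoc, hcard, Finset.sum_const, Finset.card_univ, ZMod.card,
      smul_eq_mul, pow_succ]
    ring
  exact (Finset.sum_eq_sum_iff_of_le fun x _ => hle x).1 hsum x (Finset.mem_univ x)

end Torus

section Stripe

variable {m n N : ℕ}

def IsSignVector (a : Fin n → ZMod m) : Prop :=
  ∀ i, a i = 1 ∨ a i = -1

def stripe (a : Fin n → ZMod m) (c : ZMod m) : Set (Fin n → ZMod m) :=
  (a ⬝ᵥ ·) ⁻¹' arc c

/-- A stripe written in the normal form `a 0 = 1`, which makes its parameters unique. -/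
def IsStripe (s : Set (Fin (N + 1) → ZMod m)) : Prop :=
  ∃ a c, a 0 = 1 ∧ IsSignVector a ∧ s = stripe a c

lemma isUnit_sub_of_isSignVector (hmo : Odd m) {a a' : Fin n → ZMod m} (ha : IsSignVector a)
    (ha' : IsSignVector a') {j : Fin n} (hj : a j ≠ a' j) : IsUnit (a j - a' j) := by
  have h2 : IsUnit (2 : ZMod m) := by
    simpa using (ZMod.isUnit_iff_coprime 2 m).2 (Nat.coprime_two_left.2 hmo)
  rcases ha j with h | h <;> rcases ha' j with h' | h' <;> rw [h, h'] at hj ⊢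
  · exact absurd rfl hj
  · simpa [sub_neg_eq_add, one_add_one_eq_two] using h2
  · simpa [← neg_add', one_add_one_eq_two] using h2.neg
  · exact absurd rfl hj

variable [Fact (1 < m)]

lemma isIndep_stripe {a : Fin n → ZMod m} (ha : IsSignVector a) (c : ZMod m) :
    IsIndep (torus m n) (stripe a c) := by
  refine isIndep_torus_iff.2 fun v hv j hvj => ?_
  simp only [stripe, Set.mem_preimage, dotProduct_add, dotProduct_single, mul_one] at hv hvj
  rcases ha j with h | h <;> rw [h] at hvj
  · exact add_one_notMem_arc hv hvj
  · exact add_one_notMem_arc hvj (by simpa using hv)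

lemma ncard_stripe {a : Fin (N + 1) → ZMod m} (ha : a 0 = 1) (c : ZMod m) :
    (stripe a c).ncard = m / 2 * m ^ N := by
  rw [ncard_eq_sum_ncard_cons]
  have hfiber : ∀ w, {x | Fin.cons x w ∈ stripe a c}.ncard = m / 2 := by
    intro w
    simp only [stripe, Set.mem_preimage, dotProduct, Fin.sum_univ_succ, Fin.cons_zero,
      Fin.cons_succ, ha, one_mul]
    rw [← ncard_arc c]
    exact Set.ncard_preimage_of_injective_subset_range (add_left_injective _)
      fun x _ => ⟨x - _, sub_add_cancel _ _⟩
  simp [hfiber, ZMod.card, mul_comm]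

lemma exists_dotProduct_eq_and_dotProduct_eq_of_ne (hmo : Odd m) {a a' : Fin (N + 1) → ZMod m}
    (ha0 : a 0 = 1) (ha0' : a' 0 = 1) (ha : IsSignVector a) (ha' : IsSignVector a')
    (hne : a ≠ a') (y y' : ZMod m) : ∃ v, a ⬝ᵥ v = y ∧ a' ⬝ᵥ v = y' := by
  obtain ⟨j, hj⟩ := Function.ne_iff.1 hne
  exact exists_dotProduct_eq_and_dotProduct_eq ha0 ha0'
    (isUnit_sub_of_isSignVector hmo ha ha' hj) y y'

lemma eq_of_disjoint_stripe (hmo : Odd m) {a a' : Fin (N + 1) → ZMod m} (ha0 : a 0 = 1)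
    (ha0' : a' 0 = 1) (ha : IsSignVector a) (ha' : IsSignVector a') {c c' : ZMod m}
    (h : Disjoint (stripe a c) (stripe a' c')) : a = a' := by
  by_contra hne
  obtain ⟨v, hv, hv'⟩ :=
    exists_dotProduct_eq_and_dotProduct_eq_of_ne hmo ha0 ha0' ha ha' hne c c'
  refine Set.disjoint_left.1 h (show v ∈ stripe a c from ?_) (show v ∈ stripe a' c' from ?_)
  · simpa [stripe, hv] using mem_arc_self (Fact.out : 1 < m) c
  · simpa [stripe, hv'] using mem_arc_self (Fact.out : 1 < m) c'

lemma stripe_inj (hmo : Odd m) {a a' : Fin (N + 1) → ZMod m} (ha0 : a 0 = 1) (ha0' : a' 0 = 1)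
    (ha : IsSignVector a) (ha' : IsSignVector a') {c c' : ZMod m} :
    stripe a c = stripe a' c' ↔ a = a' ∧ c = c' := by
  refine ⟨fun h => ?_, fun ⟨ha, hc⟩ => ha ▸ hc ▸ rfl⟩
  by_cases hne : a = a'
  · subst hne
    exact ⟨rfl, ((Set.preimage_injective.2 (dotProduct_surjective ha0)).comp
      (arc_injective hmo)) h⟩
  · obtain ⟨v, hv, hv'⟩ :=
      exists_dotProduct_eq_and_dotProduct_eq_of_ne hmo ha0 ha0' ha ha' hne c (c' - 1)
    have : v ∈ stripe a' c' :=
      h ▸ by simpa [stripe, hv] using mem_arc_self (Fact.out : 1 < m) c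
    exact (sub_one_notMem_arc c' (by simpa [stripe, hv'] using this)).elim

end Stripe

section Classification

variable {m N : ℕ} [Fact (1 < m)]

lemma isStripe_of_ncard_eq_one (hmo : Odd m) {s : Set (Fin 1 → ZMod m)}
    (hs : IsIndep (torus m 1) s) (hcard : s.ncard = m / 2) : IsStripe s := by
  rw [ncard_eq_sum_ncard_cons, Fintype.sum_unique] at hcard
  obtain ⟨c, hc⟩ := eq_arc_of_add_one_notMem hmo (add_one_notMem_cons_fiber hs _) hcard
  refine ⟨1, c, rfl, fun _ => Or.inl rfl, Set.ext fun v => ?_⟩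
  have hv : ∀ w : Fin 0 → ZMod m, Fin.cons (v 0) w = v := fun w => by
    rw [Subsingleton.elim w (Fin.tail v), Fin.cons_self_tail]
  simp [stripe, one_dotProduct, ← hc, hv]

lemma isStripe_of_forall_isStripe_snoc_slice (hmo : Odd m) {s : Set (Fin (N + 2) → ZMod m)}
    (hslice : ∀ x, IsStripe {w | Fin.snoc w x ∈ s})
    (hdisj : ∀ x w, Fin.snoc w x ∈ s → Fin.snoc w (x + 1) ∉ s) : IsStripe s := by
  have : NeZero m := ⟨by have := (Fact.out : 1 < m); omega⟩
  choose a c ha0 ha hs using hslice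
  have hdisj' : ∀ x, Disjoint (stripe (a x) (c x)) (stripe (a (x + 1)) (c (x + 1))) := by
    intro x
    rw [← hs, ← hs]
    exact Set.disjoint_left.2 fun w => hdisj x w
  have hconst : ∀ x, a x = a 0 := ZMod.apply_eq_apply_zero_of_add_one fun x =>
    (eq_of_disjoint_stripe hmo (ha0 x) (ha0 (x + 1)) (ha x) (ha (x + 1)) (hdisj' x)).symm
  have hstep : ∀ x, c (x + 1) - c x = 1 ∨ c (x + 1) - c x = -1 := fun x => by
    have := hdisj' x
    rw [hconst, hconst (x + 1), stripe, stripe,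
      Set.disjoint_preimage_iff (dotProduct_surjective (ha0 0))] at this
    rcases eq_add_one_or_eq_sub_one_of_disjoint_arc hmo this with h | h
    · left; rw [h]; ring
    · right; rw [h]; ring
  obtain ⟨ε, hε, hc⟩ := ZMod.exists_eq_add_mul_of_odd hmo hstep
  refine ⟨Fin.snoc (a 0) (-ε), c 0, ?_, ?_, ?_⟩
  · simpa using ha0 0
  · intro i
    refine Fin.lastCases ?_ (fun i => ?_) i
    · rcases hε with h | h <;> simp [h]
    · simpa using ha 0 i
  · ext v
    refine Fin.snocCases (fun w x => ?_) v
    have := Set.ext_iff.1 (hs x) w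
    simp only [Set.mem_ofPred_eq] at this
    rw [this, hconst, hc]
    simp [stripe, Fin.snoc_dotProduct_snoc, mem_arc_add, sub_eq_add_neg, mul_comm]

theorem isStripe_of_isIndep_of_ncard_eq (hmo : Odd m) :
    ∀ {N : ℕ} {s : Set (Fin (N + 1) → ZMod m)}, IsIndep (torus m (N + 1)) s →
      s.ncard = m / 2 * m ^ N → IsStripe s
  | 0, _, hs, hcard => isStripe_of_ncard_eq_one hmo hs (by simpa using hcard)
  | _ + 1, _, hs, hcard => isStripe_of_forall_isStripe_snoc_slice hmo
      (fun x => isStripe_of_isIndep_of_ncard_eq hmo (isIndep_snoc_slice hs x)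
        (ncard_snoc_slice_of_ncard_eq hs hcard x))
      (fun _ _ => snoc_add_one_notMem hs)

lemma maxIndep_iff {s : Set (Fin (N + 1) → ZMod m)} :
    MaxIndep (torus m (N + 1)) s ↔ IsIndep (torus m (N + 1)) s ∧ s.ncard = m / 2 * m ^ N := by
  refine ⟨fun ⟨hs, hmax⟩ => ⟨hs, (ncard_le_of_isIndep hs).antisymm ?_⟩,
    fun ⟨hs, hcard⟩ => ⟨hs, fun t ht => hcard ▸ ncard_le_of_isIndep ht⟩⟩
  rw [← ncard_stripe (a := 1) rfl 0]
  exact hmax _ (isIndep_stripe (fun _ => Or.inl rfl) 0)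

lemma maxIndep_iff_isStripe (hmo : Odd m) {s : Set (Fin (N + 1) → ZMod m)} :
    MaxIndep (torus m (N + 1)) s ↔ IsStripe s := by
  refine ⟨fun h => isStripe_of_isIndep_of_ncard_eq hmo (maxIndep_iff.1 h).1 (maxIndep_iff.1 h).2,
    ?_⟩
  rintro ⟨a, c, ha0, ha, rfl⟩
  exact maxIndep_iff.2 ⟨isIndep_stripe ha c, ncard_stripe ha0 c⟩

lemma ncard_setOf_isStripe (hmo : Odd m) :
    {s : Set (Fin (N + 1) → ZMod m) | IsStripe s}.ncard = m * 2 ^ N := by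
  have : Fact (2 < m) := ⟨by obtain ⟨r, rfl⟩ := hmo; have := (Fact.out : 1 < 2 * r + 1); omega⟩
  set A : Set (Fin (N + 1) → ZMod m) := {a | a 0 = 1 ∧ IsSignVector a}
  have hA : A = Fin.cons 1 ''
      ↑(Fintype.piFinset fun _ : Fin N => ({1, -1} : Finset (ZMod m))) := by
    ext a
    refine ⟨fun ⟨h0, ha⟩ => ⟨Fin.tail a, ?_, by rw [← h0, Fin.cons_self_tail]⟩, ?_⟩
    · simpa [Fin.tail] using fun i : Fin N => ha i.succ
    · rintro ⟨b, hb, rfl⟩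
      refine ⟨rfl, Fin.cases (Or.inl rfl) fun i => ?_⟩
      simpa using Fintype.mem_piFinset.1 hb i
  have hAcard : A.ncard = 2 ^ N := by
    rw [hA, Set.ncard_image_of_injective _ (Fin.cons_right_injective _), Set.ncard_coe_finset,
      Fintype.card_piFinset_const, Finset.card_pair ZMod.neg_one_ne_one.symm]
  have hset : {s | IsStripe s} = (fun p => stripe p.1 p.2) '' (A ×ˢ Set.univ) := by
    ext s
    simp [IsStripe, A, eq_comm, and_assoc]
  rw [hset, Set.InjOn.ncard_image, Set.ncard_prod, hAcard, Set.ncard_univ, Nat.card_zmod,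
    mul_comm]
  rintro ⟨a, c⟩ ⟨⟨ha0, ha⟩, -⟩ ⟨a', c'⟩ ⟨⟨ha0', ha'⟩, -⟩ h
  obtain ⟨rfl, rfl⟩ := (stripe_inj hmo ha0 ha0' ha ha').1 h
  rfl

end Classification

/-- For `m ≥ 3` odd, `Z_m^n` has exactly `m · 2^(n-1)` maximum independent sets, each of
cardinality `⌊m/2⌋ · m^(n-1)`. -/
theorem stmt_7 (m n : ℕ) (hm : 3 ≤ m) (hmo : Odd m) (hn : 1 ≤ n) :
    {s : Set (Fin n → ZMod m) | MaxIndep (torus m n) s}.ncard = m * 2 ^ (n - 1) ∧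
    ∀ s : Set (Fin n → ZMod m), MaxIndep (torus m n) s → s.ncard = m / 2 * m ^ (n - 1) := by
  obtain ⟨N, rfl⟩ : ∃ N, n = N + 1 := ⟨n - 1, by omega⟩
  have : Fact (1 < m) := ⟨by omega⟩
  simp only [Nat.add_sub_cancel]
  refine ⟨?_, fun s hs => (maxIndep_iff.1 hs).2⟩
  simpa only [maxIndep_iff_isStripe hmo] using ncard_setOf_isStripe hmo
end

section
/- For every n ∈ ℕ, if I and I' are two distinct maximum independent sets of the discrete torus Z_3^n, then |I ∩ I'| ≤ 3^(n−2). -/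
-- decidable facts about ZMod 3
lemma z3_perm_affine : ∀ σ : ZMod 3 → ZMod 3, Function.Injective σ →
    ∃ a ε : ZMod 3, ε ≠ 0 ∧ ∀ t, σ t = a + ε * t := by decide

lemma z3_ne_iff : ∀ a b : ZMod 3, a ≠ b → a = b + 1 ∨ a = b - 1 := by decide
lemma z3_solve : ∀ d u : ZMod 3, d ≠ 0 → ∃ t, d * t = u := by decide
lemma z3_mul_eq_zero : ∀ a x : ZMod 3, a ≠ 0 → a * x = 0 → x = 0 := by decide
lemma z3_cancel : ∀ a x y : ZMod 3, a ≠ 0 → a * x = a * y → x = y := by decide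
lemma z3_cases2 : ∀ a b : ZMod 3, a ≠ 0 → b ≠ 0 → b = a ∨ b = 2 * a := by decide
lemma z3_add_two_mul : ∀ a : ZMod 3, a + 2 * a = 0 := by decide
lemma z3_two_mul_iff : ∀ s t : ZMod 3, 2 * s = t ↔ s = 2 * t := by decide
lemma z3_ne_succ : ∀ a : ZMod 3, a ≠ a + 1 ∧ a ≠ a - 1 := by decide

theorem latin_affine : ∀ (k : ℕ) (f : (Fin k → ZMod 3) → ZMod 3),
    (∀ (j : Fin k) (x : Fin k → ZMod 3),
      Function.Injective (fun t => f (Function.update x j t))) →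
    ∃ (a : ZMod 3) (ε : Fin k → ZMod 3), (∀ i, ε i ≠ 0) ∧ ∀ x, f x = a + ∑ i, ε i * x i := by
  intro k
  induction k with
  | zero =>
    intro f _
    refine ⟨f (fun i => i.elim0), Fin.elim0, fun i => i.elim0, fun x => ?_⟩
    have hx : x = fun i => i.elim0 := funext fun i => i.elim0
    simp [hx]
  | succ k ih =>
    intro f hf
    set g : (Fin k → ZMod 3) → ZMod 3 → ZMod 3 := fun x c => f (Fin.snoc x c) with hg
    have hlat : ∀ c (j : Fin k) (x : Fin k → ZMod 3),
        Function.Injective (fun t => g (Function.update x j t) c) := by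
      intro c j x
      simpa [g, Fin.snoc_update] using hf j.castSucc (Fin.snoc x c)
    have hvert : ∀ x : Fin k → ZMod 3, Function.Injective (fun c => g x c) := by
      intro x
      simpa [g, Fin.update_snoc_last] using hf (Fin.last k) (Fin.snoc x 0)
    have H : ∀ c, ∃ (a : ZMod 3) (ε : Fin k → ZMod 3), (∀ i, ε i ≠ 0) ∧
        ∀ x, g x c = a + ∑ i, ε i * x i := fun c => ih (fun x => g x c) (hlat c)
    choose A E hE hrep using H
    have heval : ∀ c i t, g (Function.update (0 : Fin k → ZMod 3) i t) c = A c + E c i * t := by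
      intro c i t
      rw [hrep]
      congr 1
      rw [Finset.sum_eq_single i]
      · simp
      · intro b _ hb
        simp [Function.update_of_ne hb]
      · simp
    have hconst : ∀ c i, E c i = E 0 i := by
      intro c i
      by_cases hc : c = 0
      · rw [hc]
      by_contra hne
      have hd : E c i - E 0 i ≠ 0 := sub_ne_zero.mpr hne
      obtain ⟨t, ht⟩ := z3_solve _ (A 0 - A c) hd
      have : g (Function.update (0 : Fin k → ZMod 3) i t) c
           = g (Function.update (0 : Fin k → ZMod 3) i t) 0 := by
        rw [heval, heval]
        linear_combination ht
      exact hc (hvert _ this)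
    have hA : ∀ c, g 0 c = A c := by
      intro c
      rw [hrep]
      simp
    have hAinj : Function.Injective A := by
      intro c c' hcc
      apply hvert 0
      show g 0 c = g 0 c'
      rw [hA, hA, hcc]
    obtain ⟨b, ε', hε', hAaff⟩ := z3_perm_affine A hAinj
    refine ⟨b, Fin.snoc (E 0) ε', ?_, ?_⟩
    · intro i
      refine Fin.lastCases ?_ ?_ i
      · simpa using hε'
      · intro j
        simpa using hE 0 j
    · intro y
      have h1 : f y = g (Fin.init y) (y (Fin.last k)) := by
        simp [g, Fin.snoc_init_self]
      rw [h1, hrep, hAaff, Fin.sum_univ_castSucc]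
      simp only [Fin.snoc_castSucc, Fin.snoc_last]
      have h2 : ∀ i : Fin k, E (y (Fin.last k)) i * Fin.init y i
          = E 0 i * y i.castSucc := by
        intro i
        rw [hconst]
        rfl
      rw [Finset.sum_congr rfl fun i _ => h2 i]
      ring

lemma torus_adj {n : ℕ} {u v : Fin n → ZMod 3} (hne : u ≠ v) (j : Fin n)
    (h : ∀ i, i ≠ j → u i = v i) : (torus 3 n).Adj u v := by
  have hj : u j ≠ v j := by
    intro h'
    apply hne
    funext i
    by_cases hi : i = j
    · rw [hi]; exact h'
    · exact h i hi
  exact ⟨hne, Or.inl ⟨j, z3_ne_iff _ _ hj, h⟩⟩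

lemma sum_sub_single {n : ℕ} (u v : Fin n → ZMod 3) (j : Fin n)
    (h : ∀ i, i ≠ j → u i = v i) :
    (∑ i, u i) - (∑ i, v i) = u j - v j := by
  rw [← Finset.sum_sub_distrib, Finset.sum_eq_single j]
  · intro b _ hb
    rw [h b hb, sub_self]
  · simp

lemma eclass_indep (n : ℕ) : IsIndep (torus 3 n) (Eclass 3 n 0) := by
  have key : ∀ u v : Fin n → ZMod 3, u ∈ Eclass 3 n 0 → v ∈ Eclass 3 n 0 →
      (∃ j : Fin n, (u j = v j + 1 ∨ u j = v j - 1) ∧ ∀ i : Fin n, i ≠ j → u i = v i) → False := by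
    intro u v hu hv ⟨j, hj, hoff⟩
    have hs := sum_sub_single u v j hoff
    rw [hu, hv, sub_self] at hs
    have huv : u j = v j := by
      have := hs.symm
      rwa [sub_eq_zero] at this
    rcases hj with h | h
    · rw [huv] at h
      exact (z3_ne_succ (v j)).1 h
    · rw [huv] at h
      exact (z3_ne_succ (v j)).2 h
  intro u hu v hv _ hadj
  obtain ⟨-, h | h⟩ := hadj
  · exact key u v hu hv h
  · exact key v u hv hu h

lemma maxIndep_line {n : ℕ} {I : Set (Fin n → ZMod 3)} (hI : MaxIndep (torus 3 n) I)
    (j : Fin n) (x : Fin n → ZMod 3) : ∃! t : ZMod 3, Function.update x j t ∈ I := by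
  classical
  set π : (Fin n → ZMod 3) → ({i : Fin n // i ≠ j} → ZMod 3) := fun v i => v i.1 with hπ
  have hinj : ∀ S : Set (Fin n → ZMod 3), IsIndep (torus 3 n) S → Set.InjOn π S := by
    intro S hS u hu v hv huv
    by_contra hne
    exact hS hu hv hne (torus_adj hne j (fun i hi => congrFun huv ⟨i, hi⟩))
  have hsurj : ∀ w : {i : Fin n // i ≠ j} → ZMod 3, ∃ v ∈ Eclass 3 n 0, π v = w := by
    intro w
    set v : Fin n → ZMod 3 :=
      fun i => if h : i = j then - ∑ i' : {i : Fin n // i ≠ j}, w i' else w ⟨i, h⟩ with hv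
    have hmem : ∀ x : Fin n, x ∈ Finset.univ.erase j ↔ x ≠ j := by
      intro x
      simp [Finset.mem_erase]
    refine ⟨v, ?_, ?_⟩
    · show (∑ i, v i) = 0
      have hF : Fintype {x : Fin n // x ≠ j} := Subtype.fintype _
      rw [← Finset.add_sum_erase _ _ (Finset.mem_univ j), Finset.sum_subtype _ hmem v]
      have : ∀ i' : {i : Fin n // i ≠ j}, v i' = w i' := by
        intro i'
        simp only [hv, dif_neg i'.2]
      rw [Finset.sum_congr rfl fun i' _ => this i']
      simp only [hv, dif_pos]
      exact neg_add_cancel _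
    · funext i
      simp only [hπ, hv, dif_neg i.2]
  have himgE : π '' (Eclass 3 n 0) = Set.univ := by
    apply Set.eq_univ_of_forall
    intro w
    obtain ⟨v, hv, hw⟩ := hsurj w
    exact ⟨v, hv, hw⟩
  have e1 : (Eclass 3 n 0).ncard = (Set.univ : Set ({i : Fin n // i ≠ j} → ZMod 3)).ncard := by
    rw [← himgE, Set.ncard_image_of_injOn (hinj _ (eclass_indep n))]
  have e2 : (π '' I).ncard = I.ncard := Set.ncard_image_of_injOn (hinj _ hI.1)
  have hle : (Set.univ : Set ({i : Fin n // i ≠ j} → ZMod 3)).ncard ≤ (π '' I).ncard := by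
    rw [e2, ← e1]
    exact hI.2 _ (eclass_indep n)
  have himgI : π '' I = Set.univ :=
    Set.eq_of_subset_of_ncard_le (Set.subset_univ _) hle Set.finite_univ
  have hx : π x ∈ π '' I := by rw [himgI]; trivial
  obtain ⟨v, hvI, hvx⟩ := hx
  have hupd : Function.update x j (v j) = v := by
    funext i
    by_cases hi : i = j
    · subst hi; simp
    · rw [Function.update_of_ne hi]
      exact (congrFun hvx ⟨i, hi⟩).symm
  refine ⟨v j, ?_, ?_⟩
  · show Function.update x j (v j) ∈ I
    rw [hupd]; exact hvI
  intro t ht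
  have hπeq : π (Function.update x j t) = π (Function.update x j (v j)) := by
    funext i
    simp [hπ, Function.update_of_ne i.2]
  have := hinj _ hI.1 ht (by rw [hupd]; exact hvI) hπeq
  have := congrFun this j
  simpa using this

lemma maxIndep_structure {n : ℕ} (hn : 1 ≤ n) {I : Set (Fin n → ZMod 3)}
    (hI : MaxIndep (torus 3 n) I) :
    ∃ (ε : Fin n → ZMod 3) (p : ZMod 3), (∀ i, ε i ≠ 0) ∧
      I = {v | ∑ i, ε i * v i = p} := by
  classical
  have j0 : Fin n := ⟨0, hn⟩
  have hline := maxIndep_line hI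
  choose T hT using fun x => hline j0 x
  have hTmem : ∀ x, Function.update x j0 (T x) ∈ I := fun x => (hT x).1
  have hTu : ∀ x t, Function.update x j0 t ∈ I → t = T x := fun x => (hT x).2
  set F : (Fin n → ZMod 3) → ZMod 3 := fun v => v j0 - T v with hF
  have hTupd : ∀ v t, T (Function.update v j0 t) = T v := by
    intro v t
    symm
    apply hTu
    rw [Function.update_idem]
    exact hTmem v
  -- F is Latin
  have hlat : ∀ (j : Fin n) (x : Fin n → ZMod 3),
      Function.Injective (fun t => F (Function.update x j t)) := by
    intro j x
    by_cases hj : j = j0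
    · subst hj
      intro s t hst
      simp only [hF, Function.update_self, hTupd] at hst
      exact sub_left_inj.mp hst
    · intro s t hst
      simp only [hF, Function.update_of_ne (Ne.symm hj)] at hst
      -- hst : x j0 - T (update x j s) = x j0 - T (update x j t)
      have hTeq : T (Function.update x j s) = T (Function.update x j t) :=
        sub_right_inj.mp hst
      by_contra hne
      set u := Function.update (Function.update x j s) j0 (T (Function.update x j s)) with hu
      set u' := Function.update (Function.update x j t) j0 (T (Function.update x j t)) with hu'
      have huI : u ∈ I := hTmem _
      have hu'I : u' ∈ I := hTmem _
      have hoff : ∀ i, i ≠ j → u i = u' i := by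
        intro i hi
        by_cases hi0 : i = j0
        · subst hi0
          simp only [hu, hu', Function.update_self, hTeq]
        · simp only [hu, hu', Function.update_of_ne hi0, Function.update_of_ne hi]
      have huj : u j = s := by
        simp only [hu, Function.update_of_ne hj, Function.update_self]
      have hu'j : u' j = t := by
        simp only [hu', Function.update_of_ne hj, Function.update_self]
      have hneu : u ≠ u' := by
        intro h
        apply hne
        rw [← huj, ← hu'j, h]
      exact hI.1 huI hu'I hneu (torus_adj hneu j hoff)
  obtain ⟨a, ε, hε, hrep⟩ := latin_affine n F hlat
  refine ⟨ε, -a, hε, ?_⟩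
  ext v
  have hmem : v ∈ I ↔ F v = 0 := by
    constructor
    · intro hv
      have : v j0 = T v := by
        apply hTu
        rw [Function.update_eq_self]
        exact hv
      simp [hF, this]
    · intro hv
      have hv' : v j0 - T v = 0 := hv
      have h1 : T v = v j0 := (sub_eq_zero.mp hv').symm
      have h2 := hTmem v
      rwa [h1, Function.update_eq_self] at h2
  rw [hmem, hrep]
  constructor
  · intro h
    have : ∑ i, ε i * v i = -a := by linear_combination h
    exact this
  · intro h
    show a + ∑ i, ε i * v i = 0
    rw [h]; ring

lemma count_two_eq {n : ℕ} (ε δ : Fin n → ZMod 3) (p q : ZMod 3) (i0 i1 : Fin n)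
    (h : ε i0 * δ i1 ≠ ε i1 * δ i0) :
    {v : Fin n → ZMod 3 | ∑ i, ε i * v i = p ∧ ∑ i, δ i * v i = q}.ncard ≤ 3 ^ (n - 2) := by
  classical
  have hne : i0 ≠ i1 := by
    rintro rfl
    exact h rfl
  set K : Finset (Fin n) := {i0, i1} with hK
  set S : Set (Fin n → ZMod 3) := {v | ∑ i, ε i * v i = p ∧ ∑ i, δ i * v i = q} with hS
  set ρ : (Fin n → ZMod 3) → ({i : Fin n // i ∉ K} → ZMod 3) := fun v i => v i.1 with hρ
  have hinj : Set.InjOn ρ S := by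
    intro u hu v hv huv
    have hd : ∀ i, i ∉ K → u i = v i := fun i hi => congrFun huv ⟨i, hi⟩
    have key : ∀ c : Fin n → ZMod 3,
        (∑ i, c i * u i) - (∑ i, c i * v i) = c i0 * (u i0 - v i0) + c i1 * (u i1 - v i1) := by
      intro c
      rw [← Finset.sum_sub_distrib]
      have h1 : ∑ i, (c i * u i - c i * v i) = ∑ i ∈ K, (c i * u i - c i * v i) := by
        symm
        apply Finset.sum_subset (Finset.subset_univ K)
        intro i _ hiK
        rw [hd i hiK, sub_self]
      rw [h1, hK, Finset.sum_pair hne]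
      ring
    have e0 : ε i0 * (u i0 - v i0) + ε i1 * (u i1 - v i1) = 0 := by
      rw [← key ε, hu.1, hv.1, sub_self]
    have e1 : δ i0 * (u i0 - v i0) + δ i1 * (u i1 - v i1) = 0 := by
      rw [← key δ, hu.2, hv.2, sub_self]
    have hcoef : ε i0 * δ i1 - ε i1 * δ i0 ≠ 0 := sub_ne_zero.mpr h
    have hY : (ε i0 * δ i1 - ε i1 * δ i0) * (u i1 - v i1) = 0 := by
      linear_combination ε i0 * e1 - δ i0 * e0
    have hX : (ε i0 * δ i1 - ε i1 * δ i0) * (u i0 - v i0) = 0 := by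
      linear_combination δ i1 * e0 - ε i1 * e1
    have hY0 : u i1 = v i1 := by
      have := z3_mul_eq_zero _ _ hcoef hY
      rwa [sub_eq_zero] at this
    have hX0 : u i0 = v i0 := by
      have := z3_mul_eq_zero _ _ hcoef hX
      rwa [sub_eq_zero] at this
    funext i
    by_cases h0 : i = i0
    · subst h0; exact hX0
    by_cases h1 : i = i1
    · subst h1; exact hY0
    exact hd i (by simp [hK, h0, h1])
  have hcard : S.ncard ≤ (Set.univ : Set ({i : Fin n // i ∉ K} → ZMod 3)).ncard := by
    rw [← Set.ncard_image_of_injOn hinj]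
    exact Set.ncard_le_ncard (Set.subset_univ _) Set.finite_univ
  have hKcard : K.card = 2 := Finset.card_pair hne
  have hsub : Fintype.card {i : Fin n // i ∉ K} = n - 2 := by
    rw [Fintype.card_subtype_compl]
    simp [Fintype.card_coe, hKcard]
  calc S.ncard ≤ (Set.univ : Set ({i : Fin n // i ∉ K} → ZMod 3)).ncard := hcard
    _ = 3 ^ (n - 2) := by
        rw [Set.ncard_univ, Nat.card_eq_fintype_card, Fintype.card_fun, hsub]
        simp


/-- If `I, I'` are distinct maximum independent sets of `Z_3^n`, then `|I ∩ I'| ≤ 3^(n-2)`. -/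
theorem stmt_8 (n : ℕ) (hn : 1 ≤ n) (I I' : Set (Fin n → ZMod 3))
    (hI : MaxIndep (torus 3 n) I) (hI' : MaxIndep (torus 3 n) I') (hne : I ≠ I') :
    (I ∩ I').ncard ≤ 3 ^ (n - 2) := by
  classical
  obtain ⟨ε, p, hε, hIeq⟩ := maxIndep_structure hn hI
  obtain ⟨ε', p', hε', hIeq'⟩ := maxIndep_structure hn hI'
  set δ : Fin n → ZMod 3 := fun i => ε' i - ε i with hδ
  by_cases hd0 : ε' = ε
  · -- same hyperplane direction : intersection empty
    have hpp : p ≠ p' := by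
      rintro rfl
      exact hne (by rw [hIeq, hIeq', hd0])
    have hem : I ∩ I' = ∅ := by
      ext v
      simp only [Set.mem_inter_iff, Set.mem_empty_iff_false, iff_false]
      rintro ⟨hv, hv'⟩
      rw [hIeq] at hv
      rw [hIeq', hd0] at hv'
      exact hpp (hv.symm.trans hv')
    rw [hem]
    simp
  by_cases hB : ∃ i0 i1, ε i0 * δ i1 ≠ ε i1 * δ i0
  · obtain ⟨i0, i1, hpiv⟩ := hB
    have hsubset : I ∩ I' ⊆ {v : Fin n → ZMod 3 | ∑ i, ε i * v i = p ∧ ∑ i, δ i * v i = p' - p} := by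
      rintro v ⟨hv, hv'⟩
      rw [hIeq] at hv
      rw [hIeq'] at hv'
      refine ⟨hv, ?_⟩
      have : ∑ i, δ i * v i = (∑ i, ε' i * v i) - ∑ i, ε i * v i := by
        rw [← Finset.sum_sub_distrib]
        apply Finset.sum_congr rfl
        intro i _
        have hdi : δ i = ε' i - ε i := rfl
        rw [hdi]
        ring
      rw [this, hv, hv']
    calc (I ∩ I').ncard ≤ _ := Set.ncard_le_ncard hsubset (Set.toFinite _)
      _ ≤ 3 ^ (n - 2) := count_two_eq ε δ p (p' - p) i0 i1 hpiv
  -- degenerate case : δ is a multiple of ε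
  push_neg at hB
  have hd : ∃ i0, δ i0 ≠ 0 := by
    by_contra hc
    push_neg at hc
    apply hd0
    funext i
    have h2 : ε' i - ε i = 0 := hc i
    exact sub_eq_zero.mp h2
  obtain ⟨i0, hi0⟩ := hd
  rcases z3_cases2 (ε i0) (δ i0) (hε i0) hi0 with hcase | hcase
  · -- δ = ε, so ε' = 2ε
    have hall : ∀ i, δ i = ε i := by
      intro i
      have := hB i0 i
      rw [hcase] at this
      -- ε i0 * δ i = ε i * ε i0
      exact z3_cancel (ε i0) (δ i) (ε i) (hε i0) (by linear_combination this)
    have hε2 : ∀ i, ε' i = 2 * ε i := by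
      intro i
      have h2 : ε' i - ε i = ε i := hall i
      linear_combination h2
    have hI'eq2 : I' = {v : Fin n → ZMod 3 | ∑ i, ε i * v i = 2 * p'} := by
      rw [hIeq']
      ext v
      simp only [Set.mem_setOf_eq]
      have hsum : ∑ i, ε' i * v i = 2 * ∑ i, ε i * v i := by
        rw [Finset.mul_sum]
        apply Finset.sum_congr rfl
        intro i _
        rw [hε2 i]
        ring
      rw [hsum]
      exact z3_two_mul_iff _ _
    by_cases hp : 2 * p' = p
    · exfalso
      apply hne
      rw [hIeq, hI'eq2, hp]
    · have hem : I ∩ I' = ∅ := by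
        ext v
        simp only [Set.mem_inter_iff, Set.mem_empty_iff_false, iff_false]
        rintro ⟨hv, hv'⟩
        rw [hIeq] at hv
        rw [hI'eq2] at hv'
        exact hp (hv'.symm.trans hv)
      rw [hem]
      simp
  · -- δ = 2ε, so ε' = 3ε = 0 : contradiction
    exfalso
    have : δ i0 = 2 * ε i0 := hcase
    have hzero : ε' i0 = 0 := by
      have h1 : ε' i0 - ε i0 = 2 * ε i0 := this
      have : ε' i0 = ε i0 + 2 * ε i0 := by linear_combination h1
      rw [this]
      exact z3_add_two_mul (ε i0)
    exact hε' i0 hzero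
end

section
/- Let H be a finite graph and λ ∈ (0, 1/2] a real number, and set p := λ/(1 + λ). Then Σ_{A ∈ II(H)} λ^|A| ≥ (1 − p²)^{|E(H)|} / (1 − p)^{|V(H)|} ≥ exp(p·|V(H)| − 2p²·|E(H)|). -/
open Finset

section DownClosed

variable {α : Type*} [DecidableEq α] {F : Finset (Finset α)} {x : ℝ}

lemma sum_filter_mem_pow_card_le (hx : 0 ≤ x) (v : α)
    (hF : ∀ s ∈ F, v ∈ s → s.erase v ∈ F) :
    ∑ s ∈ F with v ∈ s, x ^ #s ≤ x / (1 + x) * ∑ s ∈ F, x ^ #s := by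
  have key : ∑ s ∈ F with v ∈ s, x ^ #s ≤ x * ∑ s ∈ F with v ∉ s, x ^ #s :=
    calc ∑ s ∈ F with v ∈ s, x ^ #s = x * ∑ s ∈ F with v ∈ s, x ^ #(s.erase v) := by
          rw [mul_sum]
          refine sum_congr rfl fun s hs => ?_
          rw [← pow_succ', card_erase_add_one (mem_filter.1 hs).2]
      _ = x * ∑ t ∈ {s ∈ F | v ∈ s}.image (·.erase v), x ^ #t := by
          rw [sum_image]
          exact fun s hs t ht => erase_injOn' v (mem_filter.1 hs).2 (mem_filter.1 ht).2
      _ ≤ x * ∑ s ∈ F with v ∉ s, x ^ #s := by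
          refine mul_le_mul_of_nonneg_left (sum_le_sum_of_subset_of_nonneg ?_
            fun _ _ _ => by positivity) hx
          simp only [subset_iff, mem_image, mem_filter]
          rintro _ ⟨s, ⟨hs, hvs⟩, rfl⟩
          exact ⟨hF s hs hvs, notMem_erase v s⟩
  rw [← sum_filter_add_sum_filter_not F (v ∈ ·), div_mul_eq_mul_div,
    le_div_iff₀ (by positivity)]
  linarith

lemma sum_filter_mem_mem_pow_card_le (hx : 0 ≤ x) (hF : IsLowerSet (F : Set (Finset α)))
    {u v : α} (huv : u ≠ v) :
    ∑ s ∈ F with u ∈ s ∧ v ∈ s, x ^ #s ≤ (x / (1 + x)) ^ 2 * ∑ s ∈ F, x ^ #s := by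
  rw [← filter_filter]
  calc ∑ s ∈ {s ∈ F | u ∈ s} with v ∈ s, x ^ #s
      ≤ x / (1 + x) * ∑ s ∈ F with u ∈ s, x ^ #s := by
        refine sum_filter_mem_pow_card_le hx v fun s hs _ => ?_
        rw [mem_filter] at hs ⊢
        exact ⟨hF (erase_subset v s) hs.1, mem_erase.2 ⟨huv, hs.2⟩⟩
    _ ≤ x / (1 + x) * (x / (1 + x) * ∑ s ∈ F, x ^ #s) := by
        gcongr
        exact sum_filter_mem_pow_card_le hx u fun s hs _ => hF (erase_subset u s) hs
    _ = (x / (1 + x)) ^ 2 * ∑ s ∈ F, x ^ #s := by ring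

end DownClosed

namespace SimpleGraph

variable {V : Type*} {G : SimpleGraph V} {x : ℝ}

lemma isIndep_iff_isIndep_deleteEdges {u v : V} (huv : G.Adj u v) {s : Set V} :
    IsIndep G s ↔ IsIndep (G.deleteEdges {s(u, v)}) s ∧ ¬(u ∈ s ∧ v ∈ s) := by
  refine ⟨fun h => ⟨h.mono' fun a b hab hadj => hab (deleteEdges_le _ hadj),
    fun ⟨hu, hv⟩ => h hu hv huv.ne huv⟩, fun ⟨h, huvs⟩ a ha b hb hab hadj => ?_⟩
  by_cases he : s(a, b) = s(u, v)
  · rcases Sym2.eq_iff.1 he with ⟨rfl, rfl⟩ | ⟨rfl, rfl⟩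
    exacts [huvs ⟨ha, hb⟩, huvs ⟨hb, ha⟩]
  · exact h ha hb hab (deleteEdges_adj.2 ⟨hadj, he⟩)

variable [Fintype V]

open Classical in
noncomputable def indepFinsets (G : SimpleGraph V) : Finset (Finset V) := {s | IsIndep G s}

noncomputable def indepPoly (G : SimpleGraph V) (x : ℝ) : ℝ := ∑ s ∈ G.indepFinsets, x ^ #s

@[simp]
lemma mem_indepFinsets {s : Finset V} : s ∈ G.indepFinsets ↔ IsIndep G s := by
  classical
  simp [indepFinsets]

lemma isLowerSet_indepFinsets : IsLowerSet (G.indepFinsets : Set (Finset V)) :=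
  fun _ _ hts hs => (mem_indepFinsets.1 hs).mono (coe_subset.2 hts) |> mem_indepFinsets.2

lemma indepPoly_bot : (⊥ : SimpleGraph V).indepPoly x = (1 + x) ^ Fintype.card V := by
  have hall : (⊥ : SimpleGraph V).indepFinsets = univ := by
    ext s
    simp only [mem_indepFinsets, mem_univ, iff_true]
    exact fun _ _ _ _ _ h => h
  simpa [indepPoly, hall, add_comm] using Fintype.sum_pow_mul_eq_add_pow V x 1

lemma one_sub_sq_mul_indepPoly_deleteEdges_le (hx : 0 ≤ x) {u v : V} (huv : G.Adj u v) :
    (1 - (x / (1 + x)) ^ 2) * (G.deleteEdges {s(u, v)}).indepPoly x ≤ G.indepPoly x := by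
  classical
  set G' := G.deleteEdges {s(u, v)}
  have hsplit : G'.indepPoly x =
      ∑ s ∈ G'.indepFinsets with u ∈ s ∧ v ∈ s, x ^ #s + G.indepPoly x := by
    have : G.indepFinsets = {s ∈ G'.indepFinsets | ¬(u ∈ s ∧ v ∈ s)} := by
      ext s
      simp [mem_filter, isIndep_iff_isIndep_deleteEdges huv, G']
    rw [indepPoly, indepPoly, this, sum_filter_add_sum_filter_not]
  have hboth := sum_filter_mem_mem_pow_card_le hx (isLowerSet_indepFinsets (G := G')) huv.ne
  rw [← indepPoly] at hboth
  linarith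

lemma one_sub_sq_pow_mul_le_indepPoly (hx : 0 ≤ x) (G : SimpleGraph V) :
    (1 - (x / (1 + x)) ^ 2) ^ Nat.card G.edgeSet * (1 + x) ^ Fintype.card V ≤ G.indepPoly x := by
  induction h : Nat.card G.edgeSet generalizing G with
  | zero =>
    rw [Nat.card_coe_set_eq, Set.ncard_eq_zero, edgeSet_eq_empty] at h
    simp [h, indepPoly_bot]
  | succ m ih =>
    have hne : G.edgeSet.Nonempty := Set.nonempty_coe_sort.1 (Nat.card_pos_iff.1 (by omega)).1
    obtain ⟨u, v, huv⟩ := ne_bot_iff_exists_adj.1 (edgeSet_nonempty.1 hne)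
    have hm : Nat.card (G.deleteEdges {s(u, v)}).edgeSet = m := by
      rw [Nat.card_coe_set_eq, edgeSet_deleteEdges,
        Set.ncard_sdiff_singleton_of_mem (G.mem_edgeSet.2 huv), ← Nat.card_coe_set_eq, h,
        Nat.add_sub_cancel]
    have hq : 0 ≤ 1 - (x / (1 + x)) ^ 2 := by
      have : x / (1 + x) ≤ 1 := div_le_one_of_le₀ (by linarith) (by positivity)
      nlinarith [div_nonneg hx (by positivity : (0 : ℝ) ≤ 1 + x)]
    calc (1 - (x / (1 + x)) ^ 2) ^ (m + 1) * (1 + x) ^ Fintype.card V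
        = (1 - (x / (1 + x)) ^ 2) * ((1 - (x / (1 + x)) ^ 2) ^ m * (1 + x) ^ Fintype.card V) := by
          ring
      _ ≤ (1 - (x / (1 + x)) ^ 2) * (G.deleteEdges {s(u, v)}).indepPoly x :=
          mul_le_mul_of_nonneg_left (ih _ hm) hq
      _ ≤ G.indepPoly x := one_sub_sq_mul_indepPoly_deleteEdges_le hx huv

lemma finsum_isIndep_eq_indepPoly (G : SimpleGraph V) (x : ℝ) :
    ∑ᶠ A ∈ {s : Set V | IsIndep G s}, x ^ A.ncard = G.indepPoly x := by
  have : {s : Set V | IsIndep G s} = ((↑) : Finset V → Set V) '' G.indepFinsets := by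
    ext s
    refine ⟨fun hs => ⟨s.toFinite.toFinset, by simpa using hs, by simp⟩, ?_⟩
    rintro ⟨t, ht, rfl⟩
    simpa using ht
  rw [this, finsum_mem_image coe_injective.injOn, finsum_mem_coe_finset]
  simp [indepPoly]

end SimpleGraph

namespace Real

lemma exp_le_inv_one_sub {x : ℝ} (hx : x < 1) : exp x ≤ (1 - x)⁻¹ := by
  rw [← inv_inv (exp x), ← exp_neg]
  exact inv_anti₀ (by linarith) (by linarith [add_one_le_exp (-x)])

lemma exp_neg_two_mul_le_one_sub {x : ℝ} (h0 : 0 ≤ x) (h1 : x ≤ 1 / 2) :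
    exp (-(2 * x)) ≤ 1 - x := by
  rw [exp_neg]
  calc (exp (2 * x))⁻¹ ≤ (1 + 2 * x)⁻¹ :=
        inv_anti₀ (by positivity) (by linarith [add_one_le_exp (2 * x)])
    _ ≤ 1 - x := by
      rw [inv_le_iff_one_le_mul₀ (by positivity)]
      nlinarith

lemma exp_le_one_sub_sq_pow_div_one_sub_pow {p : ℝ} (hp1 : p < 1) (hp2 : p ^ 2 ≤ 1 / 2)
    (n m : ℕ) :
    exp (p * n - 2 * p ^ 2 * m) ≤ (1 - p ^ 2) ^ m / (1 - p) ^ n := by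
  rw [show p * n - 2 * p ^ 2 * m = n * p + m * (-(2 * p ^ 2)) by ring, exp_add, exp_nat_mul,
    exp_nat_mul, div_eq_inv_mul, ← inv_pow]
  gcongr
  · exact exp_le_inv_one_sub hp1
  · exact exp_neg_two_mul_le_one_sub (sq_nonneg p) hp2

end Real

/-- For a finite graph `H` and `λ ∈ (0, 1/2]`, with `p := λ/(1+λ)`:
`Σ_{A ∈ II(H)} λ^|A| ≥ (1−p²)^|E(H)| / (1−p)^|V(H)| ≥ exp(p·|V(H)| − 2p²·|E(H)|)`. -/
theorem stmt_12 {V : Type*} [Fintype V] (H : SimpleGraph V) (lam : ℝ)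
    (hlam0 : 0 < lam) (hlam1 : lam ≤ 1 / 2) (p : ℝ) (hp : p = lam / (1 + lam)) :
    ((1 - p ^ 2) ^ (Nat.card H.edgeSet) / (1 - p) ^ (Fintype.card V) ≤
      ∑ᶠ A ∈ {s : Set V | IsIndep H s}, lam ^ A.ncard) ∧
    Real.exp (p * Fintype.card V - 2 * p ^ 2 * Nat.card H.edgeSet) ≤
      (1 - p ^ 2) ^ (Nat.card H.edgeSet) / (1 - p) ^ (Fintype.card V) := by
  have hp0 : 0 < p := hp ▸ by positivity
  have hp3 : p ≤ 1 / 3 := by rw [hp, div_le_iff₀ (by linarith)]; linarith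
  have h1p : 1 - p = (1 + lam)⁻¹ := by rw [hp]; field_simp; ring
  refine ⟨?_, Real.exp_le_one_sub_sq_pow_div_one_sub_pow (by linarith) (by nlinarith) _ _⟩
  rw [H.finsum_isIndep_eq_indepPoly, h1p, inv_pow, div_inv_eq_mul, hp]
  exact H.one_sub_sq_pow_mul_le_indepPoly hlam0.le
end

section
/- Let G be a finite graph and I an independent set of G, and write V(G) \ I for the complement of I. Then the number of independent sets of G equals Σ_{A} 2^(|I| − |N_G(A, I)|), where the sum ranges over all independent sets A of the induced subgraph G[V(G) \ I]. -/
lemma fiber_card {V : Type*} [Fintype V] (G : SimpleGraph V) (I : Set V) (hI : IsIndep G I)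
    (A : Set ↥(Iᶜ : Set V)) (hA : IsIndep (G.induce Iᶜ) A) :
    Nat.card {s : Set V // IsIndep G s ∧ Subtype.val ⁻¹' s = A} =
      2 ^ (I.ncard - (nbhdIn G (Subtype.val '' A) I).ncard) := by
  classical
  set A' : Set V := Subtype.val '' A with hA'def
  set T : Set V := I \ nbhdIn G A' I with hTdef
  have hA'sub : A' ⊆ Iᶜ := Subtype.coe_image_subset _ _
  have hTsub : T ⊆ I := Set.diff_subset
  have hA'indep : IsIndep G A' := by
    rintro _ ⟨x, hx, rfl⟩ _ ⟨y, hy, rfl⟩ hne hadj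
    exact hA hx hy (fun h => hne (by rw [h])) hadj
  -- membership of a neighbor of A' in nbhdIn
  have hnb : ∀ ⦃x y : V⦄, x ∈ A' → y ∈ I → G.Adj x y → y ∈ nbhdIn G A' I := by
    intro x y hx hyI hadj
    refine ⟨⟨?_, ?_⟩, hyI⟩
    · exact Set.mem_biUnion hx hadj
    · exact fun hyA' => (hA'sub hyA') hyI
  have hmem : ∀ B : Set ↥T, IsIndep G (A' ∪ Subtype.val '' B) ∧
      (Subtype.val ⁻¹' (A' ∪ Subtype.val '' B) : Set ↥(Iᶜ : Set V)) = A := by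
    intro B
    have hB'sub : Subtype.val '' B ⊆ T := Subtype.coe_image_subset _ _
    constructor
    · intro x hx y hy hne hadj
      rcases hx with hx | hx <;> rcases hy with hy | hy
      · exact hA'indep hx hy hne hadj
      · exact ((hB'sub hy).2) (hnb hx (hTsub (hB'sub hy)) hadj)
      · exact ((hB'sub hx).2) (hnb hy (hTsub (hB'sub hx)) hadj.symm)
      · exact hI (hTsub (hB'sub hx)) (hTsub (hB'sub hy)) hne hadj
    · ext z
      simp only [Set.mem_preimage, Set.mem_union]
      constructor
      · rintro (hz | hz)
        · rcases hz with ⟨w, hw, hwz⟩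
          rwa [← Subtype.coe_injective hwz]
        · exact absurd (hTsub (hB'sub hz)) z.2
      · intro hz
        exact Or.inl ⟨z, hz, rfl⟩
  have e : {s : Set V // IsIndep G s ∧ Subtype.val ⁻¹' s = A} ≃ Set ↥T := by
    refine ⟨fun s => Subtype.val ⁻¹' s.val, fun B => ⟨A' ∪ Subtype.val '' B, hmem B⟩, ?_, ?_⟩
    · rintro ⟨s, hs, hpre⟩
      have hA's : A' ⊆ s := by
        rw [hA'def, ← hpre]
        rintro _ ⟨z, hz, rfl⟩; exact hz
      ext x
      simp only [Subtype.image_preimage_coe, Set.mem_union]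
      constructor
      · rintro (hx | hx)
        · exact hA's hx
        · exact hx.2
      · intro hx
        by_cases hxI : x ∈ I
        · refine Or.inr ⟨⟨hxI, ?_⟩, hx⟩
          rintro ⟨⟨hx1, hx2⟩, -⟩
          rcases Set.mem_iUnion₂.mp hx1 with ⟨a, ha, hadj⟩
          exact hs (hA's ha) hx (fun h => hx2 (h ▸ ha)) hadj
        · left
          rw [hA'def, ← hpre]
          exact ⟨⟨x, hxI⟩, hx, rfl⟩
    · intro B
      ext y
      simp only [Set.mem_preimage, Set.mem_union]
      constructor
      · rintro (hy | hy)
        · exact absurd (hTsub y.2) (hA'sub hy)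
        · rcases hy with ⟨w, hw, hwy⟩
          rwa [← Subtype.coe_injective hwy]
      · intro hy
        exact Or.inr ⟨y, hy, rfl⟩
  rw [Nat.card_congr e, Nat.card_eq_fintype_card, Fintype.card_set,
    ← Nat.card_eq_fintype_card, Nat.card_coe_set_eq, hTdef,
    Set.ncard_diff (show nbhdIn G A' I ⊆ I from Set.inter_subset_right)]


lemma indep_preimage {V : Type*} (G : SimpleGraph V) (I : Set V) {s : Set V}
    (hs : IsIndep G s) : IsIndep (G.induce Iᶜ) (Subtype.val ⁻¹' s) := by
  intro x hx y hy hne hadj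
  exact hs hx hy (fun h => hne (Subtype.coe_injective h)) hadj

/-- For a finite graph `G` and an independent set `I`, the number of independent sets of `G`
equals `Σ_A 2^(|I| − |N_G(A, I)|)`, summed over the independent sets `A` of the induced
subgraph `G[V(G) \ I]`. -/
theorem stmt_13 {V : Type*} [Fintype V] (G : SimpleGraph V) (I : Set V)
    (hI : IsIndep G I) :
    Nat.card {s : Set V // IsIndep G s} =
      ∑ᶠ A ∈ {A : Set ↥(Iᶜ) | IsIndep (G.induce Iᶜ) A},
        2 ^ (I.ncard - (nbhdIn G (Subtype.val '' A) I).ncard) := by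
  classical
  calc Nat.card {s : Set V // IsIndep G s}
      = Nat.card (Σ A : Set ↥(Iᶜ : Set V),
          {x : {s : Set V // IsIndep G s} // Subtype.val ⁻¹' x.val = A}) :=
        Nat.card_congr (Equiv.sigmaFiberEquiv
          (fun x : {s : Set V // IsIndep G s} => Subtype.val ⁻¹' x.val)).symm
    _ = ∑ A : Set ↥(Iᶜ : Set V),
          Nat.card {s : Set V // IsIndep G s ∧ Subtype.val ⁻¹' s = A} := by
        rw [Nat.card_eq_fintype_card, Fintype.card_sigma]
        exact Finset.sum_congr rfl fun A _ => by
          rw [← Nat.card_eq_fintype_card]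
          exact Nat.card_congr (Equiv.subtypeSubtypeEquivSubtypeInter (fun s : Set V => IsIndep G s) (fun s => Subtype.val ⁻¹' s = A))
    _ = ∑ A : Set ↥(Iᶜ : Set V),
          if IsIndep (G.induce Iᶜ) A then
            2 ^ (I.ncard - (nbhdIn G (Subtype.val '' A) I).ncard) else 0 := by
        refine Finset.sum_congr rfl fun A _ => ?_
        by_cases hA : IsIndep (G.induce Iᶜ) A
        · rw [if_pos hA, fiber_card G I hI A hA]
        · rw [if_neg hA]
          have : IsEmpty {s : Set V // IsIndep G s ∧ Subtype.val ⁻¹' s = A} :=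
            ⟨fun x => hA (x.2.2 ▸ indep_preimage G I x.2.1)⟩
          exact Nat.card_of_isEmpty
    _ = ∑ᶠ A ∈ {A : Set ↥(Iᶜ) | IsIndep (G.induce Iᶜ) A},
          2 ^ (I.ncard - (nbhdIn G (Subtype.val '' A) I).ncard) := by
        rw [finsum_mem_eq_toFinset_sum, Set.toFinset_setOf, Finset.sum_filter]
end

section
/- Let G be a finite graph and I an independent set of G. Then |II(G)| = 2^|I| · Σ_𝒮 Π_{S ∈ 𝒮} 2^(−|N_G(S, I)|), where the sum ranges over all collections 𝒮 of pairwise compatible polymers of the polymer model P(G, I) (including the empty collection, which contributes the empty product 1). -/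
/-- `S` is `(2, I)`-linked if the induced subgraph `G[S ∪ N_G(S, I)]` is connected. -/
def Linked2 {V : Type*} (G : SimpleGraph V) (I : Set V) (S : Set V) : Prop :=
  (G.induce (S ∪ nbhdIn G S I)).Connected

/-- A polymer of the polymer model `P(G, I)`: a nonempty `(2, I)`-linked subset of
`V(G) \ I` that is independent in `G`. -/
def Polymer {V : Type*} (G : SimpleGraph V) (I : Set V) (S : Set V) : Prop :=
  S.Nonempty ∧ S ⊆ Iᶜ ∧ IsIndep G S ∧ Linked2 G I S

/-- Two (distinct) polymers `S, T` are compatible if `S ∪ T` is independent in `G` but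
not `(2, I)`-linked. -/
def Compatible {V : Type*} (G : SimpleGraph V) (I : Set V) (S T : Set V) : Prop :=
  IsIndep G (S ∪ T) ∧ ¬ Linked2 G I (S ∪ T)

/-!
Send an independent set `J` to the family of `(2, I)`-linked components of `J \ I`. These
components are pairwise compatible polymers, and `J` is recovered from them together with
`J ∩ I`, which may be any subset of `I` avoiding the neighbourhood of `J \ I`. So the
independent sets lying over a compatible family `𝒮` number `2 ^ |I \ N(⋃ 𝒮, I)|`.
Compatible polymers have disjoint sets `S ∪ N(S, I)`, hence `|N(⋃ 𝒮, I)| = Σ_{S ∈ 𝒮} |N(S, I)|`,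
which turns this count into `2 ^ |I| · Π_{S ∈ 𝒮} 2 ^ (-|N(S, I)|)`.
-/

open Set

section Reachability

variable {V : Type*} {G : SimpleGraph V} {W W' : Set V}

def AdjWithin (G : SimpleGraph V) (W : Set V) (a b : V) : Prop :=
  a ∈ W ∧ b ∈ W ∧ G.Adj a b

def ReachWithin (G : SimpleGraph V) (W : Set V) : V → V → Prop :=
  Relation.ReflTransGen (AdjWithin G W)

theorem AdjWithin.symm {a b : V} (h : AdjWithin G W a b) : AdjWithin G W b a :=
  ⟨h.2.1, h.1, h.2.2.symm⟩

theorem ReachWithin.symm {a b : V} (h : ReachWithin G W a b) : ReachWithin G W b a :=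
  by
  induction h with
  | refl => exact Relation.ReflTransGen.refl
  | tail _ hstep ih => exact Relation.ReflTransGen.head hstep.symm ih

theorem ReachWithin.trans {a b c : V} (h : ReachWithin G W a b) (h' : ReachWithin G W b c) :
    ReachWithin G W a c :=
  Relation.ReflTransGen.trans h h'

theorem ReachWithin.mono (hW : W ⊆ W') {a b : V} (h : ReachWithin G W a b) :
    ReachWithin G W' a b :=
  Relation.ReflTransGen.mono (fun _ _ hab => ⟨hW hab.1, hW hab.2.1, hab.2.2⟩) _ _ h

theorem ReachWithin.of_walk {a b : W} (p : (G.induce W).Walk a b) : ReachWithin G W a b := by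
  induction p with
  | nil => exact Relation.ReflTransGen.refl
  | cons h _ ih => exact Relation.ReflTransGen.head ⟨Subtype.coe_prop _, Subtype.coe_prop _, h⟩ ih

theorem ReachWithin.reachable {a b : V} (h : ReachWithin G W a b) (ha : a ∈ W) :
    ∃ hb : b ∈ W, (G.induce W).Reachable ⟨a, ha⟩ ⟨b, hb⟩ := by
  induction h with
  | refl => exact ⟨ha, .refl _⟩
  | tail _ hstep ih =>
    obtain ⟨_, hreach⟩ := ih
    exact ⟨hstep.2.1, hreach.trans (SimpleGraph.Adj.reachable hstep.2.2)⟩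

theorem ReachWithin.restrict_reachClass {x b : V} (h : ReachWithin G W x b) :
    ReachWithin G {z ∈ W | ReachWithin G W x z} x b := by
  induction h with
  | refl => exact Relation.ReflTransGen.refl
  | tail hxc hstep ih => exact ih.tail ⟨⟨hstep.1, hxc⟩, ⟨hstep.2.1, hxc.tail hstep⟩, hstep.2.2⟩

theorem connected_induce_iff :
    (G.induce W).Connected ↔ W.Nonempty ∧ ∀ a ∈ W, ∀ b ∈ W, ReachWithin G W a b := by
  constructor
  · intro h
    obtain ⟨w⟩ := h.nonempty
    exact ⟨⟨w, w.2⟩, fun a ha b hb => (h.preconnected ⟨a, ha⟩ ⟨b, hb⟩).elim ReachWithin.of_walk⟩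
  · rintro ⟨⟨w, hw⟩, hreach⟩
    have : Nonempty W := ⟨⟨w, hw⟩⟩
    exact ⟨fun a b => (hreach a a.2 b b.2).reachable a.2 |>.2⟩

end Reachability

section Neighbourhoods

variable {V : Type*} {G : SimpleGraph V} {I S T X D : Set V}

theorem IsIndep.not_adj {s : Set V} (h : IsIndep G s) {a b : V} (ha : a ∈ s) (hb : b ∈ s) :
    ¬ G.Adj a b :=
  fun hadj => h ha hb (G.ne_of_adj hadj) hadj

theorem IsIndep.mono {s t : Set V} (ht : IsIndep G t) (h : s ⊆ t) : IsIndep G s :=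
  Set.Pairwise.mono h ht

theorem mem_nbhdIn {u : V} : u ∈ nbhdIn G X I ↔ u ∈ I ∧ u ∉ X ∧ ∃ x ∈ X, G.Adj x u := by
  simp only [nbhdIn, nbhd, mem_inter_iff, mem_sdiff, mem_iUnion, SimpleGraph.mem_neighborSet]
  tauto

theorem mem_nbhdIn_of_adj (hX : X ⊆ Iᶜ) {x u : V} (hu : u ∈ I) (hx : x ∈ X) (hadj : G.Adj x u) :
    u ∈ nbhdIn G X I :=
  mem_nbhdIn.2 ⟨hu, fun huX => hX huX hu, x, hx, hadj⟩

theorem nbhdIn_mono (hXD : X ⊆ D) (hD : D ⊆ Iᶜ) : nbhdIn G X I ⊆ nbhdIn G D I := by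
  intro u hu
  obtain ⟨huI, -, x, hx, hadj⟩ := mem_nbhdIn.1 hu
  exact mem_nbhdIn_of_adj hD huI (hXD hx) hadj

theorem nbhdIn_sUnion {𝒮 : Set (Set V)} (h : ∀ S ∈ 𝒮, S ⊆ Iᶜ) :
    nbhdIn G (⋃₀ 𝒮) I = ⋃ S ∈ 𝒮, nbhdIn G S I := by
  ext u
  simp only [mem_nbhdIn, mem_iUnion, mem_sUnion]
  constructor
  · rintro ⟨huI, -, x, ⟨S, hS, hxS⟩, hadj⟩
    exact ⟨S, hS, huI, fun huS => h S hS huS huI, x, hxS, hadj⟩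
  · rintro ⟨S, hS, huI, -, x, hxS, hadj⟩
    exact ⟨huI, fun ⟨T, hT, huT⟩ => h T hT huT huI, x, ⟨S, hS, hxS⟩, hadj⟩

theorem nbhdIn_union (hS : S ⊆ Iᶜ) (hT : T ⊆ Iᶜ) :
    nbhdIn G (S ∪ T) I = nbhdIn G S I ∪ nbhdIn G T I := by
  rw [← sUnion_pair, nbhdIn_sUnion (by rintro R (rfl | rfl) <;> assumption), biUnion_pair]

def closedNbhdIn (G : SimpleGraph V) (S I : Set V) : Set V :=
  S ∪ nbhdIn G S I

theorem closedNbhdIn_mono (hXD : X ⊆ D) (hD : D ⊆ Iᶜ) :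
    closedNbhdIn G X I ⊆ closedNbhdIn G D I :=
  union_subset_union hXD (nbhdIn_mono hXD hD)

theorem closedNbhdIn_union (hS : S ⊆ Iᶜ) (hT : T ⊆ Iᶜ) :
    closedNbhdIn G (S ∪ T) I = closedNbhdIn G S I ∪ closedNbhdIn G T I := by
  rw [closedNbhdIn, nbhdIn_union hS hT, closedNbhdIn, closedNbhdIn, union_union_union_comm]

theorem linked2_iff : Linked2 G I S ↔ (closedNbhdIn G S I).Nonempty ∧
    ∀ a ∈ closedNbhdIn G S I, ∀ b ∈ closedNbhdIn G S I, ReachWithin G (closedNbhdIn G S I) a b :=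
  connected_induce_iff

end Neighbourhoods

section Pieces

variable {V : Type*} {G : SimpleGraph V} {I D : Set V}

/-- The `(2, I)`-linked component of `D` containing `x`. -/
def piece (G : SimpleGraph V) (I D : Set V) (x : V) : Set V :=
  {y ∈ D | ReachWithin G (closedNbhdIn G D I) x y}

def pieces (G : SimpleGraph V) (I J : Set V) : Set (Set V) :=
  piece G I (J \ I) '' (J \ I)

theorem piece_subset {x : V} : piece G I D x ⊆ D := fun _ hy => hy.1

theorem mem_piece_self {x : V} (hx : x ∈ D) : x ∈ piece G I D x :=
  ⟨hx, Relation.ReflTransGen.refl⟩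

theorem piece_eq_of_reachWithin {x y : V} (h : ReachWithin G (closedNbhdIn G D I) x y) :
    piece G I D x = piece G I D y := by
  ext z
  exact ⟨fun hz => ⟨hz.1, h.symm.trans hz.2⟩, fun hz => ⟨hz.1, h.trans hz.2⟩⟩

/-- A path leaving `D` for `I` has to come back through `D`, as `I` is independent. -/
theorem closedNbhdIn_piece (hI : IsIndep G I) (hD : D ⊆ Iᶜ) {x : V} (hx : x ∈ D) :
    closedNbhdIn G (piece G I D x) I =
      {z ∈ closedNbhdIn G D I | ReachWithin G (closedNbhdIn G D I) x z} := by
  ext z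
  constructor
  · rintro (⟨hzD, hxz⟩ | hz)
    · exact ⟨Or.inl hzD, hxz⟩
    · obtain ⟨hzI, -, s, ⟨hsD, hxs⟩, hadj⟩ := mem_nbhdIn.1 hz
      have hzW : z ∈ closedNbhdIn G D I := Or.inr (mem_nbhdIn_of_adj hD hzI hsD hadj)
      exact ⟨hzW, hxs.tail ⟨Or.inl hsD, hzW, hadj⟩⟩
  · rintro ⟨hzD | hzN, hxz⟩
    · exact Or.inl ⟨hzD, hxz⟩
    · have hzI : z ∈ I := (mem_nbhdIn.1 hzN).1
      rcases Relation.ReflTransGen.cases_tail hxz with rfl | ⟨c, hxc, hcz⟩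
      · exact absurd hzI (hD hx)
      · rcases hcz.1 with hcD | hcN
        · exact Or.inr (mem_nbhdIn_of_adj (fun _ hy => hD hy.1) hzI ⟨hcD, hxc⟩ hcz.2.2)
        · exact absurd hcz.2.2 (hI.not_adj (mem_nbhdIn.1 hcN).1 hzI)

theorem linked2_piece (hI : IsIndep G I) (hD : D ⊆ Iᶜ) {x : V} (hx : x ∈ D) :
    Linked2 G I (piece G I D x) := by
  rw [linked2_iff, closedNbhdIn_piece hI hD hx]
  refine ⟨⟨x, Or.inl hx, Relation.ReflTransGen.refl⟩, ?_⟩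
  rintro a ⟨-, hxa⟩ b ⟨-, hxb⟩
  exact hxa.restrict_reachClass.symm.trans hxb.restrict_reachClass

theorem polymer_piece (hI : IsIndep G I) (hD : D ⊆ Iᶜ) (hDind : IsIndep G D) {x : V}
    (hx : x ∈ D) : Polymer G I (piece G I D x) :=
  ⟨⟨x, mem_piece_self hx⟩, piece_subset.trans hD, hDind.mono piece_subset,
    linked2_piece hI hD hx⟩

theorem compatible_piece (hD : D ⊆ Iᶜ) (hDind : IsIndep G D) {x y : V} (hx : x ∈ D)
    (hy : y ∈ D) (hne : piece G I D x ≠ piece G I D y) :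
    Compatible G I (piece G I D x) (piece G I D y) := by
  have hsub : piece G I D x ∪ piece G I D y ⊆ D := union_subset piece_subset piece_subset
  refine ⟨hDind.mono hsub, fun hlink => hne (piece_eq_of_reachWithin ?_)⟩
  exact ((linked2_iff.1 hlink).2 x (Or.inl (Or.inl (mem_piece_self hx)))
    y (Or.inl (Or.inr (mem_piece_self hy)))).mono (closedNbhdIn_mono hsub hD)

theorem sUnion_pieces {J : Set V} : ⋃₀ pieces G I J = J \ I := by
  refine Subset.antisymm ?_ fun z hz => ⟨piece G I (J \ I) z, ⟨z, hz, rfl⟩, mem_piece_self hz⟩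
  rintro z ⟨-, ⟨x, -, rfl⟩, hz⟩
  exact piece_subset hz

end Pieces

section Families

variable {V : Type*} {G : SimpleGraph V} {I S T : Set V} {𝒮 : Set (Set V)}

def polymerFamilies (G : SimpleGraph V) (I : Set V) : Set (Set (Set V)) :=
  {𝒮 | (∀ S ∈ 𝒮, Polymer G I S) ∧ 𝒮.Pairwise (Compatible G I)}

theorem Compatible.disjoint_closedNbhdIn (hS : Polymer G I S) (hT : Polymer G I T)
    (hc : Compatible G I S T) : Disjoint (closedNbhdIn G S I) (closedNbhdIn G T I) := by
  rw [Set.disjoint_left]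
  intro v hvS hvT
  apply hc.2
  rw [linked2_iff, closedNbhdIn_union hS.2.1 hT.2.1]
  have hreach : ∀ a ∈ closedNbhdIn G S I ∪ closedNbhdIn G T I,
      ReachWithin G (closedNbhdIn G S I ∪ closedNbhdIn G T I) a v := by
    rintro a (ha | ha)
    · exact ((linked2_iff.1 hS.2.2.2).2 a ha v hvS).mono subset_union_left
    · exact ((linked2_iff.1 hT.2.2.2).2 a ha v hvT).mono subset_union_right
  exact ⟨⟨v, Or.inl hvS⟩, fun a ha b hb => (hreach a ha).trans (hreach b hb).symm⟩

theorem sUnion_subset_compl (h𝒮 : 𝒮 ∈ polymerFamilies G I) : ⋃₀ 𝒮 ⊆ Iᶜ :=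
  sUnion_subset fun S hS => (h𝒮.1 S hS).2.1

theorem pieces_mem_polymerFamilies (hI : IsIndep G I) {J : Set V} (hJ : IsIndep G J) :
    pieces G I J ∈ polymerFamilies G I := by
  have hD : J \ I ⊆ Iᶜ := fun _ hz => hz.2
  have hDind : IsIndep G (J \ I) := hJ.mono sdiff_subset
  constructor
  · rintro S ⟨x, hx, rfl⟩
    exact polymer_piece hI hD hDind hx
  · rintro S ⟨x, hx, rfl⟩ T ⟨y, hy, rfl⟩ hne
    exact compatible_piece hD hDind hx hy hne

theorem not_adj_of_mem_sUnion (h𝒮 : 𝒮 ∈ polymerFamilies G I) {u v : V} (hu : u ∈ ⋃₀ 𝒮)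
    (hv : v ∈ ⋃₀ 𝒮) : ¬ G.Adj u v := by
  obtain ⟨S, hS, huS⟩ := hu
  obtain ⟨T, hT, hvT⟩ := hv
  by_cases hST : S = T
  · subst hST
    exact (h𝒮.1 S hS).2.2.1.not_adj huS hvT
  · exact (h𝒮.2 hS hT hST).1.not_adj (Or.inl huS) (Or.inr hvT)

theorem isIndep_sUnion_union (hI : IsIndep G I) (h𝒮 : 𝒮 ∈ polymerFamilies G I) {A : Set V}
    (hA : A ⊆ I \ nbhdIn G (⋃₀ 𝒮) I) : IsIndep G (⋃₀ 𝒮 ∪ A) := by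
  have hcross : ∀ u ∈ ⋃₀ 𝒮, ∀ v ∈ A, ¬ G.Adj u v := fun u hu v hv hadj =>
    (hA hv).2 (mem_nbhdIn_of_adj (sUnion_subset_compl h𝒮) (hA hv).1 hu hadj)
  rintro u (hu | hu) v (hv | hv) - hadj
  · exact not_adj_of_mem_sUnion h𝒮 hu hv hadj
  · exact hcross u hu v hv hadj
  · exact hcross v hv u hu hadj.symm
  · exact hI.not_adj (hA hu).1 (hA hv).1 hadj

/-- Compatibility rules out edges from `S ∪ N(S, I)` to other members of `𝒮`, and `I` is
independent. -/
theorem mem_closedNbhdIn_of_adjWithin (hI : IsIndep G I) (h𝒮 : 𝒮 ∈ polymerFamilies G I)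
    (hS : S ∈ 𝒮) {c z : V} (hc : c ∈ closedNbhdIn G S I)
    (hcz : AdjWithin G (closedNbhdIn G (⋃₀ 𝒮) I) c z) : z ∈ closedNbhdIn G S I := by
  have hSI : S ⊆ Iᶜ := (h𝒮.1 S hS).2.1
  rcases hcz.2.1 with ⟨T, hT, hzT⟩ | hzN
  · by_cases hTS : T = S
    · exact Or.inl (hTS ▸ hzT)
    rcases hc with hcS | hcN
    · exact absurd hcz.2.2 ((h𝒮.2 hS hT (Ne.symm hTS)).1.not_adj (Or.inl hcS) (Or.inr hzT))
    · have hcT : c ∈ closedNbhdIn G T I :=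
        Or.inr (mem_nbhdIn_of_adj (h𝒮.1 T hT).2.1 (mem_nbhdIn.1 hcN).1 hzT hcz.2.2.symm)
      exact absurd hcT (Set.disjoint_left.1 ((h𝒮.2 hS hT (Ne.symm hTS)).disjoint_closedNbhdIn
        (h𝒮.1 S hS) (h𝒮.1 T hT)) (Or.inr hcN))
  · have hzI : z ∈ I := (mem_nbhdIn.1 hzN).1
    rcases hc with hcS | hcN
    · exact Or.inr (mem_nbhdIn_of_adj hSI hzI hcS hcz.2.2)
    · exact absurd hcz.2.2 (hI.not_adj (mem_nbhdIn.1 hcN).1 hzI)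

theorem piece_sUnion (hI : IsIndep G I) (h𝒮 : 𝒮 ∈ polymerFamilies G I) (hS : S ∈ 𝒮) {x : V}
    (hx : x ∈ S) : piece G I (⋃₀ 𝒮) x = S := by
  have hD := sUnion_subset_compl h𝒮
  apply Subset.antisymm
  · have hclosed : ∀ z, ReachWithin G (closedNbhdIn G (⋃₀ 𝒮) I) x z → z ∈ closedNbhdIn G S I := by
      intro z hxz
      induction hxz with
      | refl => exact Or.inl hx
      | tail _ hstep ih => exact mem_closedNbhdIn_of_adjWithin hI h𝒮 hS ih hstep
    rintro z ⟨hzD, hxz⟩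
    exact (hclosed z hxz).resolve_right fun hzN => hD hzD (mem_nbhdIn.1 hzN).1
  · intro y hy
    refine ⟨⟨S, hS, hy⟩, ?_⟩
    exact ((linked2_iff.1 (h𝒮.1 S hS).2.2.2).2 x (Or.inl hx) y (Or.inl hy)).mono
      (closedNbhdIn_mono (subset_sUnion_of_mem hS) hD)

theorem pieces_sUnion_union (hI : IsIndep G I) (h𝒮 : 𝒮 ∈ polymerFamilies G I) {A : Set V}
    (hA : A ⊆ I) : pieces G I (⋃₀ 𝒮 ∪ A) = 𝒮 := by
  have hdiff : (⋃₀ 𝒮 ∪ A) \ I = ⋃₀ 𝒮 := by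
    rw [union_sdiff_distrib, sdiff_eq_empty.2 hA, union_empty,
      sdiff_eq_left.2 (subset_compl_iff_disjoint_right.1 (sUnion_subset_compl h𝒮))]
  ext S
  rw [pieces, hdiff]
  constructor
  · rintro ⟨x, ⟨T, hT, hxT⟩, rfl⟩
    rwa [piece_sUnion hI h𝒮 hT hxT]
  · intro hS
    obtain ⟨x, hx⟩ := (h𝒮.1 S hS).1
    exact ⟨x, ⟨S, hS, hx⟩, piece_sUnion hI h𝒮 hS hx⟩

end Families

theorem finprod_mem_pow_eq_pow_finsum_mem {α M : Type*} [CommMonoid M] {s : Set α}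
    (hs : s.Finite) (a : M) (f : α → ℕ) : ∏ᶠ i ∈ s, a ^ f i = a ^ ∑ᶠ i ∈ s, f i := by
  rw [finprod_mem_eq_finite_toFinset_prod _ hs, finsum_mem_eq_finite_toFinset_sum _ hs,
    Finset.prod_pow_eq_pow_sum]

section Counting

variable {V : Type*} {G : SimpleGraph V} {I : Set V}

theorem inter_subset_sdiff_nbhdIn {J : Set V} (hJ : IsIndep G J) :
    J ∩ I ⊆ I \ nbhdIn G (J \ I) I := by
  rintro a ⟨haJ, haI⟩
  refine ⟨haI, fun haN => ?_⟩
  obtain ⟨-, -, x, hx, hadj⟩ := mem_nbhdIn.1 haN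
  exact hJ.not_adj hx.1 haJ hadj

/-- An independent set `J` corresponds to its pieces `pieces G I J` and its trace `J ∩ I`. -/
def indepEquivSigma (hI : IsIndep G I) :
    {J : Set V // IsIndep G J} ≃
      Σ 𝒮 : polymerFamilies G I, 𝒫 (I \ nbhdIn G (⋃₀ (𝒮 : Set (Set V))) I) where
  toFun J := ⟨⟨pieces G I J, pieces_mem_polymerFamilies hI J.2⟩,
    ⟨J.1 ∩ I, by
      rw [mem_powerset_iff, sUnion_pieces]
      exact inter_subset_sdiff_nbhdIn J.2⟩⟩
  invFun p := ⟨⋃₀ p.1.1 ∪ p.2.1, isIndep_sUnion_union hI p.1.2 p.2.2⟩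
  left_inv J := Subtype.ext (by simp only [sUnion_pieces, sdiff_union_inter])
  right_inv p := by
    have hA : p.2.1 ⊆ I := fun _ ha => (p.2.2 ha).1
    refine Sigma.subtype_ext (Subtype.ext (pieces_sUnion_union hI p.1.2 hA)) ?_
    change (⋃₀ p.1.1 ∪ p.2.1) ∩ I = p.2.1
    rw [union_inter_distrib_right,
      (subset_compl_iff_disjoint_right.1 (sUnion_subset_compl p.1.2)).inter_eq, empty_union,
      inter_eq_left.2 hA]

theorem card_indep_eq_finsum [Finite V] (hI : IsIndep G I) :
    Nat.card {J : Set V // IsIndep G J} =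
      ∑ᶠ 𝒮 ∈ polymerFamilies G I, 2 ^ (I \ nbhdIn G (⋃₀ 𝒮) I).ncard := by
  have := Fintype.ofFinite (polymerFamilies G I)
  rw [Nat.card_congr (indepEquivSigma hI), Nat.card_sigma, ← finsum_set_coe_eq_finsum_mem,
    finsum_eq_sum_of_fintype]
  exact Finset.sum_congr rfl fun 𝒮 _ => by rw [Nat.card_coe_set_eq, ncard_powerset]

theorem finprod_inv_two_pow_ncard_nbhdIn [Finite V] {𝒮 : Set (Set V)}
    (h𝒮 : 𝒮 ∈ polymerFamilies G I) :
    ∏ᶠ S ∈ 𝒮, ((2 : ℝ) ^ (nbhdIn G S I).ncard)⁻¹ = ((2 : ℝ) ^ (nbhdIn G (⋃₀ 𝒮) I).ncard)⁻¹ := by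
  have hdisj : 𝒮.PairwiseDisjoint (nbhdIn G · I) := fun S hS T hT hST =>
    ((h𝒮.2 hS hT hST).disjoint_closedNbhdIn (h𝒮.1 S hS) (h𝒮.1 T hT)).mono
      subset_union_right subset_union_right
  rw [finprod_mem_inv_distrib _ (toFinite 𝒮), nbhdIn_sUnion fun S hS => (h𝒮.1 S hS).2.1,
    (toFinite 𝒮).ncard_biUnion (fun _ _ => toFinite _) hdisj,
    finprod_mem_pow_eq_pow_finsum_mem (toFinite 𝒮)]

end Counting

/-- `|II(G)| = 2^|I| · Σ_𝒮 Π_{S ∈ 𝒮} 2^(−|N_G(S, I)|)`, where the sum ranges over all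
collections `𝒮` of pairwise compatible polymers of `P(G, I)`. -/
theorem stmt_14 {V : Type*} [Fintype V] (G : SimpleGraph V) (I : Set V)
    (hI : IsIndep G I) :
    (Nat.card {s : Set V // IsIndep G s} : ℝ) =
      2 ^ I.ncard *
        ∑ᶠ 𝒮 ∈ {𝒮 : Set (Set V) | (∀ S ∈ 𝒮, Polymer G I S) ∧ 𝒮.Pairwise (Compatible G I)},
          ∏ᶠ S ∈ 𝒮, ((2 : ℝ) ^ (nbhdIn G S I).ncard)⁻¹ := by
  rw [card_indep_eq_finsum hI, Nat.cast_finsum_mem (toFinite _), mul_finsum_mem]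
  refine finsum_mem_congr rfl fun 𝒮 h𝒮 => ?_
  have hN : nbhdIn G (⋃₀ 𝒮) I ⊆ I := inter_subset_right
  rw [finprod_inv_two_pow_ncard_nbhdIn h𝒮, ← ncard_sdiff_add_ncard_of_subset hN, pow_add,
    mul_inv_cancel_right₀ (by positivity)]
  norm_cast
end
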